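/- arXiv:math/0512254 — 3 statements merged into one kernel-verified Lean document; each statement's English description precedes it below -/
import Mathlib

section
/- Let (Λ,d) be a finite 2-graph satisfying condition (3.1) such that the set S of sources of the blue graph is the vertex set of a single isolated cycle in the red graph, and let {s_λ : λ ∈ Λ} be a Cuntz–Krieger Λ-family in a C*-algebra A. Let Y := (blue Λ)S, fix a red edge e⋆ with r(e⋆), s(e⋆) ∈ S, and for α, β ∈ Y let ν₀(α,β) be the unique red path connecting s(α) and s(β) (in either direction) with ⟨ν₀(α,β), e⋆⟩ = 0. Define θ(α,β) := s_α s_{ν₀(α,β)} s_β* if s(ν₀(α,β)) = s(β), and θ(α,β) := s_α s_{ν₀(α,β)}* s_β* if s(ν₀(α,β)) = s(α). Then {θ(α,β) : α, β ∈ Y} is a family of matrix units: θ(α,β)* = θ(β,α) and θ(α,β)θ(η,ζ) = δ_{β,η} θ(α,ζ) for all α, β, η, ζ ∈ Y. Moreover, if s_v ≠ 0 for every vertex v, then every θ(α,β) is nonzero. -/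
open scoped ENNReal

/-- A rank-2 graph (`2`-graph): a countable category whose morphisms (paths) carry a
degree functor `d : Path → ℕ × ℕ` satisfying the unique factorisation property.
Vertices are identified with the paths of degree `(0,0)`; composition is a total
function whose behaviour is constrained only on composable pairs (`s p = r q`). -/
structure TwoGraph where
  Path : Type
  countable : Countable Path
  d : Path → ℕ × ℕ
  r : Path → Path
  s : Path → Path
  comp : Path → Path → Path
  d_r : ∀ p, d (r p) = 0
  d_s : ∀ p, d (s p) = 0
  r_vertex : ∀ p, d p = 0 → r p = p
  s_vertex : ∀ p, d p = 0 → s p = p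
  id_comp : ∀ p, comp (r p) p = p
  comp_id : ∀ p, comp p (s p) = p
  r_comp : ∀ p q, s p = r q → r (comp p q) = r p
  s_comp : ∀ p q, s p = r q → s (comp p q) = s q
  d_comp : ∀ p q, s p = r q → d (comp p q) = d p + d q
  comp_assoc : ∀ p q t, s p = r q → s q = r t → comp (comp p q) t = comp p (comp q t)
  factor : ∀ (lam : Path) (m n : ℕ × ℕ), d lam = m + n →
    ∃! mn : Path × Path,
      d mn.1 = m ∧ d mn.2 = n ∧ s mn.1 = r mn.2 ∧ comp mn.1 mn.2 = lam

namespace TwoGraph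

variable (G : TwoGraph)

/-- Vertices are the paths of degree `0`. -/
def IsVertex (p : G.Path) : Prop := G.d p = 0

/-- A blue path: one whose degree lies in `ℕ e₁`. -/
def IsBlue (p : G.Path) : Prop := (G.d p).2 = 0

/-- A red path: one whose degree lies in `ℕ e₂`. -/
def IsRed (p : G.Path) : Prop := (G.d p).1 = 0

/-- A blue edge: a path of degree `e₁ = (1,0)`. -/
def IsBlueEdge (p : G.Path) : Prop := G.d p = (1, 0)

/-- A red edge: a path of degree `e₂ = (0,1)`. -/
def IsRedEdge (p : G.Path) : Prop := G.d p = (0, 1)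

/-- `Λ` is row-finite: `vΛⁿ` is finite for every vertex `v` and degree `n`. -/
def RowFinite : Prop :=
  ∀ (v : G.Path) (n : ℕ × ℕ), G.IsVertex v →
    {p : G.Path | G.r p = v ∧ G.d p = n}.Finite

/-- `Λ` is a finite `2`-graph: `Λⁿ` is finite for every degree `n`. -/
def FinitePaths : Prop := ∀ n : ℕ × ℕ, {p : G.Path | G.d p = n}.Finite

/-- `μ` is an initial segment of `lam`, i.e. `lam = μ ν` for some `ν`. -/
def InitSeg (μ lam : G.Path) : Prop := ∃ ν, G.s μ = G.r ν ∧ G.comp μ ν = lam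

/-- `μ` is a final segment of `lam`, i.e. `lam = ν μ` for some `ν`. -/
def FinalSeg (μ lam : G.Path) : Prop := ∃ ν, G.s ν = G.r μ ∧ G.comp ν μ = lam

/-- The vertex `v` lies on the path `lam`, i.e. `v = lam(n)` for some `0 ≤ n ≤ d lam`. -/
def OnPath (lam v : G.Path) : Prop :=
  G.IsVertex v ∧ ∃ μ, G.InitSeg μ lam ∧ G.s μ = v

/-- A cycle: `d lam ≠ 0`, `r lam = s lam`, and `lam(n) ≠ s lam` for `0 < n < d lam`. -/
def IsCycle (lam : G.Path) : Prop :=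
  G.d lam ≠ 0 ∧ G.r lam = G.s lam ∧
    ∀ μ, G.InitSeg μ lam → G.d μ ≠ 0 → G.d μ ≠ G.d lam → G.s μ ≠ G.s lam

/-- `lam` has no entrance: for `n ≤ d lam`, every path of degree `n` with range `r lam`
is the initial segment `lam(0,n)`. -/
def HasNoEntrance (lam : G.Path) : Prop :=
  ∀ n : ℕ × ℕ, n ≤ G.d lam → ∀ μ, G.d μ = n → G.r μ = G.r lam → G.InitSeg μ lam

/-- `lam` has no exit: for `n ≤ d lam`, every path of degree `n` with source `s lam`
is the final segment `lam(d lam - n, d lam)`. -/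
def HasNoExit (lam : G.Path) : Prop :=
  ∀ n : ℕ × ℕ, n ≤ G.d lam → ∀ μ, G.d μ = n → G.s μ = G.s lam → G.FinalSeg μ lam

/-- An isolated cycle: no entrances and no exits. -/
def IsIsolated (lam : G.Path) : Prop := G.HasNoEntrance lam ∧ G.HasNoExit lam

/-- An isolated cycle in the red graph. -/
def IsIsolatedRedCycle (lam : G.Path) : Prop :=
  G.IsRed lam ∧ G.IsCycle lam ∧ G.IsIsolated lam

/-- Condition (3.1): `Λ` is row-finite, the blue graph contains no cycles, and each
vertex is the range of an isolated cycle in the red graph. -/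
def Cond31 : Prop :=
  G.RowFinite ∧ (∀ p, G.IsBlue p → ¬ G.IsCycle p) ∧
    ∀ v, G.IsVertex v → ∃ lam, G.IsIsolatedRedCycle lam ∧ G.r lam = v

/-- A source of the blue graph: a vertex receiving no blue edges. -/
def IsBlueSource (v : G.Path) : Prop :=
  G.IsVertex v ∧ ∀ e, G.IsBlueEdge e → G.r e ≠ v

/-- A sink of the blue graph: a vertex emitting no blue edges. -/
def IsBlueSink (v : G.Path) : Prop :=
  G.IsVertex v ∧ ∀ e, G.IsBlueEdge e → G.s e ≠ v

/-- `Λ^{≤ n}`. -/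
def LeSet (n : ℕ × ℕ) : Set G.Path :=
  {lam | G.d lam ≤ n ∧
    ∀ μ, G.s lam = G.r μ → G.comp lam μ ≠ lam → ¬ G.d (G.comp lam μ) ≤ n}

/-- `IsSwap ρ τ τ' ρ'` says that `(τ', ρ') = 𝓕(ρ, τ)` is the factorisation of `ρτ`
with the degrees in the reversed order: `τ'ρ' = ρτ`, `d τ' = d τ` and `d ρ' = d ρ`. -/
def IsSwap (ρ τ τ' ρ' : G.Path) : Prop :=
  G.s ρ = G.r τ ∧ G.s τ' = G.r ρ' ∧ G.d τ' = G.d τ ∧ G.d ρ' = G.d ρ ∧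
    G.comp τ' ρ' = G.comp ρ τ

/-- The edge `e` occurs at position `n` in the red path `μ`. -/
def OccAt (μ e : G.Path) (n : ℕ) : Prop :=
  ∃ ρ ξ, G.d ρ = (0, n) ∧ G.s ρ = G.r e ∧ G.s e = G.r ξ ∧
    G.comp ρ (G.comp e ξ) = μ

/-- `⟨μ, e⟩`: the number of occurrences of the red edge `e` in the red path `μ`. -/
noncomputable def occCount (μ e : G.Path) : ℕ :=
  Nat.card {n : ℕ // G.OccAt μ e n}

/-- Membership in `Y = (blue Λ)S`: a blue path whose source is a source of the
blue graph. -/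
def InY (α : G.Path) : Prop := G.IsBlue α ∧ G.IsBlueSource (G.s α)

/-- One step of the factorisation permutation `𝓕` of the blue paths of a GBD:
`α' = 𝓕(α)` iff `f α = α' f'` for (the) red edges `f, f'` with `s f = r α`. -/
def FStep (α α' : G.Path) : Prop :=
  G.IsBlue α ∧ G.IsBlue α' ∧
    ∃ f f', G.IsRedEdge f ∧ G.IsRedEdge f' ∧ G.s f = G.r α ∧ G.s α' = G.r f' ∧
      G.comp f α = G.comp α' f'

end TwoGraph

/-- `k`-fold iteration of the factorisation permutation, as a relation. -/
def TwoGraph.FIter (G : TwoGraph) : ℕ → G.Path → G.Path → Prop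
  | 0, α, α' => α = α'
  | k + 1, α, α' => ∃ β, G.FStep α β ∧ TwoGraph.FIter G k β α'

namespace TwoGraph

variable (G : TwoGraph)

/-- `o(α) = k`: `k` is the order of the blue path `α` under the factorisation
permutation `𝓕`. -/
def HasOrder (α : G.Path) (k : ℕ) : Prop :=
  0 < k ∧ G.FIter k α α ∧ ∀ m, 0 < m → m < k → ¬ G.FIter m α α

end TwoGraph

/-- `IsChainComp [e₁, …, eₙ] β` says `β = e₁ e₂ ⋯ eₙ`. -/
def TwoGraph.IsChainComp (G : TwoGraph) : List G.Path → G.Path → Prop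
  | [], β => G.IsVertex β
  | e :: l, β => ∃ γ, TwoGraph.IsChainComp G l γ ∧ G.s e = G.r γ ∧ β = G.comp e γ

/-- `cyclePow lam m = lam^m`, the `m`-fold concatenation of the cycle `lam`,
with `lam^0 = s lam`. -/
def TwoGraph.cyclePow (G : TwoGraph) (lam : G.Path) : ℕ → G.Path
  | 0 => G.s lam
  | m + 1 => G.comp lam (TwoGraph.cyclePow G lam m)

namespace TwoGraph

variable (G : TwoGraph)

/-! ### Relative (sub-2-graph) versions of the basic notions -/

/-- `μ` is an initial segment of `lam` within `P`. -/
def InitSegIn (P : Set G.Path) (μ lam : G.Path) : Prop :=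
  ∃ ν ∈ P, G.s μ = G.r ν ∧ G.comp μ ν = lam

/-- `μ` is a final segment of `lam` within `P`. -/
def FinalSegIn (P : Set G.Path) (μ lam : G.Path) : Prop :=
  ∃ ν ∈ P, G.s ν = G.r μ ∧ G.comp ν μ = lam

/-- A cycle of the sub-2-graph with path-set `P`. -/
def IsCycleIn (P : Set G.Path) (lam : G.Path) : Prop :=
  lam ∈ P ∧ G.d lam ≠ 0 ∧ G.r lam = G.s lam ∧
    ∀ μ ∈ P, G.InitSegIn P μ lam → G.d μ ≠ 0 → G.d μ ≠ G.d lam → G.s μ ≠ G.s lam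

def HasNoEntranceIn (P : Set G.Path) (lam : G.Path) : Prop :=
  ∀ n : ℕ × ℕ, n ≤ G.d lam → ∀ μ ∈ P, G.d μ = n → G.r μ = G.r lam → G.InitSegIn P μ lam

def HasNoExitIn (P : Set G.Path) (lam : G.Path) : Prop :=
  ∀ n : ℕ × ℕ, n ≤ G.d lam → ∀ μ ∈ P, G.d μ = n → G.s μ = G.s lam → G.FinalSegIn P μ lam

/-- An isolated cycle of the red graph of the sub-2-graph with path-set `P`. -/
def IsIsolatedRedCycleIn (P : Set G.Path) (lam : G.Path) : Prop :=
  lam ∈ P ∧ G.IsRed lam ∧ G.IsCycleIn P lam ∧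
    G.HasNoEntranceIn P lam ∧ G.HasNoExitIn P lam

def RowFiniteIn (P : Set G.Path) : Prop :=
  ∀ (v : G.Path) (n : ℕ × ℕ), G.IsVertex v →
    {p : G.Path | p ∈ P ∧ G.r p = v ∧ G.d p = n}.Finite

/-- A source of the blue graph of the sub-2-graph with path-set `P`. -/
def IsBlueSourceIn (P : Set G.Path) (v : G.Path) : Prop :=
  v ∈ P ∧ G.IsVertex v ∧ ∀ e ∈ P, G.IsBlueEdge e → G.r e ≠ v

/-- Condition (3.1) for the sub-2-graph with path-set `P`. -/
def Cond31In (P : Set G.Path) : Prop :=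
  G.RowFiniteIn P ∧ (∀ p ∈ P, G.IsBlue p → ¬ G.IsCycleIn P p) ∧
    ∀ v ∈ P, G.IsVertex v → ∃ lam, G.IsIsolatedRedCycleIn P lam ∧ G.r lam = v

/-- `Λ_j = {λ ∈ Λ : s(λ) Λ W ≠ ∅}`: the paths admitting a path from their source
into the vertex set `W`. -/
def subGraphTo (W : Set G.Path) : Set G.Path :=
  {p | ∃ μ, G.r μ = G.s p ∧ G.s μ ∈ W}

/-- `Λ` has large-permutation factorisations. -/
def HasLPF : Prop :=
  ∀ v, G.IsVertex v → ∀ l : ℕ, 0 < l → ∃ N : ℕ,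
    ∀ α, G.IsBlue α → G.r α = v → G.d α = (N, 0) →
      ∀ k, G.HasOrder α k → l < k

end TwoGraph

/-- A generalised Bratteli diagram of depth `N ∈ ℕ ∪ {∞}` with vertex decomposition
`Λ⁰ = ⊔ₙ V n`. -/
structure IsGBD (G : TwoGraph) (N : ℕ∞) (V : ℕ → Set G.Path) : Prop where
  rowFinite : G.RowFinite
  level_nonempty : ∀ n : ℕ, (n : ℕ∞) ≤ N → (V n).Nonempty
  level_finite : ∀ n : ℕ, (V n).Finite
  level_empty : ∀ n : ℕ, ¬ ((n : ℕ∞) ≤ N) → V n = ∅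
  level_vertex : ∀ n, V n ⊆ {v | G.IsVertex v}
  cover : ∀ v, G.IsVertex v → ∃ n, v ∈ V n
  level_disjoint : ∀ m n, m ≠ n → Disjoint (V m) (V n)
  blue_level : ∀ e, G.IsBlueEdge e → ∃ n, G.r e ∈ V n ∧ G.s e ∈ V (n + 1)
  sinks_bottom : ∀ v, G.IsBlueSink v → v ∈ V 0
  sources_top : ∀ v, G.IsBlueSource v → ∃ n : ℕ, (n : ℕ∞) = N ∧ v ∈ V n
  red_cycle : ∀ v, G.IsVertex v → ∃ lam, G.IsIsolatedRedCycle lam ∧ G.r lam = v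
  red_level : ∀ f, G.IsRedEdge f → ∃ n, G.r f ∈ V n ∧ G.s f ∈ V n

/-- The sub-2-graph `Λ_N` of paths joining vertices in the first `N` levels. -/
def levelPaths (G : TwoGraph) (V : ℕ → Set G.Path) (N : ℕ) : Set G.Path :=
  {p | (∃ n ≤ N, G.r p ∈ V n) ∧ (∃ n ≤ N, G.s p ∈ V n)}

/-- An infinite path in a 2-graph: a degree-preserving functor `Ω₂ → Λ`, recorded by
its segments `x(m,n)` for `m ≤ n` in `ℕ × ℕ`. -/
structure InfPath (G : TwoGraph) where
  seg : ℕ × ℕ → ℕ × ℕ → G.Path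
  deg : ∀ m n : ℕ × ℕ, m ≤ n → G.d (seg m n) = n - m
  range_seg : ∀ m n : ℕ × ℕ, m ≤ n → G.r (seg m n) = seg m m
  source_seg : ∀ m n : ℕ × ℕ, m ≤ n → G.s (seg m n) = seg n n
  comp_seg : ∀ m n p : ℕ × ℕ, m ≤ n → n ≤ p → G.comp (seg m n) (seg n p) = seg m p

/-- A Cuntz–Krieger `Λ`-family in a C*-algebra `A`. -/
structure CKFamily (G : TwoGraph) (A : Type*) [CStarAlgebra A] where
  S : G.Path → A
  ck1_sa : ∀ v, G.IsVertex v → star (S v) = S v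
  ck1_idem : ∀ v, G.IsVertex v → S v * S v = S v
  ck1_orth : ∀ v w, G.IsVertex v → G.IsVertex w → v ≠ w → S v * S w = 0
  ck2 : ∀ p q, G.s p = G.r q → S p * S q = S (G.comp p q)
  ck3 : ∀ p, star (S p) * S p = S (G.s p)
  ck4 : ∀ (v : G.Path) (n : ℕ × ℕ), G.IsVertex v →
    S v = ∑ᶠ lam ∈ {lam : G.Path | lam ∈ G.LeSet n ∧ G.r lam = v},
      S lam * star (S lam)

section CStar

variable {A : Type*} [CStarAlgebra A]

/-- The C*-subalgebra (as a subset) of `A` generated by a set `SS`. -/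
def generatedCStar (SS : Set A) : Set A :=
  closure (NonUnitalStarAlgebra.adjoin ℂ SS : Set A)

/-- `P` is full in the C*-algebra `Bset ⊆ A`: every closed two-sided ideal of `Bset`
containing `P` is all of `Bset`. -/
def FullIn (Bset : Set A) (P : A) : Prop :=
  ∀ I : Set A, I ⊆ Bset → IsClosed I →
    (∀ x ∈ I, ∀ y ∈ I, x + y ∈ I) → (∀ (c : ℂ), ∀ x ∈ I, c • x ∈ I) →
    (∀ a ∈ Bset, ∀ x ∈ I, a * x ∈ I ∧ x * a ∈ I) →
    P ∈ I → Bset ⊆ I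

/-- The sum `∑_{v ∈ Λ⁰} s_v`, which is the unit of `C*(Λ)` for finite `Λ`. -/
noncomputable def ckUnit (G : TwoGraph) (F : CKFamily G A) : A :=
  ∑ᶠ v ∈ {v : G.Path | G.IsVertex v}, F.S v

/-- The canonical unitary `U = ∑_{α ∈ Y} s_α s_{λ(α)} s_α*`. -/
noncomputable def ckU (G : TwoGraph) (F : CKFamily G A) (lam : G.Path → G.Path) : A :=
  ∑ᶠ α ∈ {α : G.Path | G.InY α}, F.S α * F.S (lam α) * star (F.S α)

/-- The gauge action: for every `z ∈ 𝕋²` there is a *-automorphism `γ_z` of the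
C*-subalgebra generated by the family with `γ_z(s_λ) = z^{d(λ)} s_λ`. -/
def GaugeInvariant (G : TwoGraph) (F : CKFamily G A) : Prop :=
  ∀ z₁ z₂ : ℂ, ‖z₁‖ = 1 → ‖z₂‖ = 1 → ∃ γ : A → A,
    Set.BijOn γ (generatedCStar (Set.range F.S)) (generatedCStar (Set.range F.S)) ∧
    (∀ x ∈ generatedCStar (Set.range F.S), ∀ y ∈ generatedCStar (Set.range F.S),
      γ (x + y) = γ x + γ y ∧ γ (x * y) = γ x * γ y) ∧
    (∀ x ∈ generatedCStar (Set.range F.S), γ (star x) = star (γ x)) ∧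
    (∀ (c : ℂ), ∀ x ∈ generatedCStar (Set.range F.S), γ (c • x) = c • γ x) ∧
    (∀ p : G.Path, γ (F.S p) = (z₁ ^ (G.d p).1 * z₂ ^ (G.d p).2) • F.S p)

end CStar


/-! ### Auxiliary development for Statement 4 -/

namespace TwoGraph

variable {G : TwoGraph}

lemma vertex_r {v : G.Path} (hv : G.IsVertex v) : G.r v = v := G.r_vertex v hv
lemma vertex_s {v : G.Path} (hv : G.IsVertex v) : G.s v = v := G.s_vertex v hv
lemma vertex_s' (p : G.Path) : G.IsVertex (G.s p) := G.d_s p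
lemma vertex_r' (p : G.Path) : G.IsVertex (G.r p) := G.d_r p

/-- Unique factorisation, stated for two factorisations of the same path. -/
lemma factor_eq {a b a' b' : G.Path}
    (hab : G.s a = G.r b) (hab' : G.s a' = G.r b')
    (h : G.comp a b = G.comp a' b') (hd : G.d a = G.d a') : a = a' ∧ b = b' := by
  have hdp : G.d (G.comp a b) = G.d a + G.d b := G.d_comp a b hab
  have hdb : G.d b = G.d b' := by
    have h2 : G.d (G.comp a' b') = G.d a' + G.d b' := G.d_comp a' b' hab'
    rw [h, h2, ← hd] at hdp
    exact (add_right_injective _ hdp.symm)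
  have := (G.factor (G.comp a b) (G.d a) (G.d b) hdp).unique
    (y₁ := (a, b)) (y₂ := (a', b')) ⟨rfl, rfl, hab, rfl⟩
    ⟨hd.symm, hdb.symm, hab', h.symm⟩
  exact ⟨congrArg Prod.fst this, congrArg Prod.snd this⟩

lemma comp_cancel_left {m p p' : G.Path} (h1 : G.s m = G.r p) (h2 : G.s m = G.r p')
    (h : G.comp m p = G.comp m p') : p = p' :=
  (factor_eq h1 h2 h rfl).2

/-- Existence part of factorisation, unpacked. -/
lemma factor_exists (lam : G.Path) (m n : ℕ × ℕ) (h : G.d lam = m + n) :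
    ∃ a b : G.Path, G.d a = m ∧ G.d b = n ∧ G.s a = G.r b ∧ G.comp a b = lam := by
  obtain ⟨⟨a, b⟩, ⟨h1, h2, h3, h4⟩, -⟩ := G.factor lam m n h
  exact ⟨a, b, h1, h2, h3, h4⟩

/-! #### Occurrence counting lemmas -/

lemma occ_le {mu e : G.Path} {n : ℕ} (h : G.OccAt mu e n) :
    n + (G.d e).2 ≤ (G.d mu).2 := by
  obtain ⟨p, x, hd, hs, hs', hc⟩ := h
  have hre : G.r (G.comp e x) = G.r e := G.r_comp e x hs'
  have h1 : G.d (G.comp e x) = G.d e + G.d x := G.d_comp e x hs'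
  have h2 : G.d mu = G.d p + G.d (G.comp e x) := by
    rw [← hc]; exact G.d_comp _ _ (by rw [hre]; exact hs)
  rw [h1, hd] at h2
  have : (G.d mu).2 = n + ((G.d e).2 + (G.d x).2) := by rw [h2]; rfl
  omega

lemma occ_finite (mu e : G.Path) : {n : ℕ | G.OccAt mu e n}.Finite := by
  apply (Set.finite_Iic (G.d mu).2).subset
  intro n hn
  exact Set.mem_Iic.2 (le_trans (Nat.le_add_right n _) (occ_le hn))

lemma not_occ_of_occCount_zero {mu e : G.Path} (h : G.occCount mu e = 0) (n : ℕ) :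
    ¬ G.OccAt mu e n := by
  intro hn
  haveI : Finite {n : ℕ // G.OccAt mu e n} := (occ_finite mu e).to_subtype
  haveI : Nonempty {n : ℕ // G.OccAt mu e n} := ⟨⟨n, hn⟩⟩
  have := Nat.card_pos (α := {n : ℕ // G.OccAt mu e n})
  rw [TwoGraph.occCount] at h
  omega

lemma occCount_zero_of_not_occ {mu e : G.Path} (h : ∀ n, ¬ G.OccAt mu e n) :
    G.occCount mu e = 0 := by
  haveI : IsEmpty {n : ℕ // G.OccAt mu e n} := ⟨fun x => h x.1 x.2⟩
  exact Nat.card_of_isEmpty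

lemma occCount_vertex {v e : G.Path} (hv : G.IsVertex v) (he : (G.d e).2 ≠ 0) :
    G.occCount v e = 0 := by
  apply occCount_zero_of_not_occ
  intro n hn
  have := occ_le hn
  rw [hv] at this
  simp only [Prod.snd_zero] at this
  omega

lemma occ_prefix {mu nu e : G.Path} {n : ℕ} (hcomp : G.s mu = G.r nu)
    (h : G.OccAt mu e n) : G.OccAt (G.comp mu nu) e n := by
  obtain ⟨p, x, hd, hs, hs', hc⟩ := h
  refine ⟨p, G.comp x nu, hd, hs, ?_, ?_⟩
  · rw [G.r_comp x nu (by rw [← hc] at hcomp; rwa [G.s_comp _ _ (by rw [G.r_comp e x hs']; exact hs), G.s_comp e x hs'] at hcomp)]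
    exact hs'
  · have hex : G.s p = G.r (G.comp e x) := by rw [G.r_comp e x hs']; exact hs
    have hxnu : G.s x = G.r nu := by
      rw [← hc, G.s_comp _ _ hex, G.s_comp e x hs'] at hcomp; exact hcomp
    have hexnu : G.s (G.comp e x) = G.r nu := by rw [G.s_comp e x hs']; exact hxnu
    rw [← G.comp_assoc e x nu hs' hxnu, ← G.comp_assoc p (G.comp e x) nu hex hexnu, hc]

lemma occ_suffix {mu nu e : G.Path} {k n : ℕ} (hmu : G.d mu = (0, k))
    (hcomp : G.s mu = G.r nu) (h : G.OccAt nu e n) :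
    G.OccAt (G.comp mu nu) e (k + n) := by
  obtain ⟨p, x, hd, hs, hs', hc⟩ := h
  have hrp : G.r p = G.r nu := by rw [← hc]; exact (G.r_comp p _ (by rw [G.r_comp e x hs']; exact hs)).symm
  have hmp : G.s mu = G.r p := by rw [hcomp, hrp]
  refine ⟨G.comp mu p, x, ?_, ?_, hs', ?_⟩
  · rw [G.d_comp mu p hmp, hmu, hd]; rfl
  · rw [G.s_comp mu p hmp]; exact hs
  · rw [G.comp_assoc mu p _ hmp (by rw [G.r_comp e x hs']; exact hs), hc]

lemma occ_split {mu nu e : G.Path} {k l n : ℕ} (hmu : G.d mu = (0, k))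
    (hnu : G.d nu = (0, l)) (he : G.d e = (0, 1)) (hcomp : G.s mu = G.r nu)
    (h : G.OccAt (G.comp mu nu) e n) :
    G.OccAt mu e n ∨ ∃ j, n = k + j ∧ G.OccAt nu e j := by
  obtain ⟨p, x, hd, hs, hs', hc⟩ := h
  have hex : G.s p = G.r (G.comp e x) := by rw [G.r_comp e x hs']; exact hs
  have hdcomp : G.d (G.comp mu nu) = (0, k + l) := by
    rw [G.d_comp mu nu hcomp, hmu, hnu]; rfl
  have hlen : n + 1 ≤ k + l := by
    have := occ_le (⟨p, x, hd, hs, hs', hc⟩ : G.OccAt (G.comp mu nu) e n)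
    rw [hdcomp, he] at this; exact this
  by_cases hnk : n + 1 ≤ k
  · -- occurrence inside mu
    obtain ⟨m1, m2, hm1, hm2, hm3, hm4⟩ := factor_exists mu (0, n+1) (0, k - (n+1))
      (by rw [hmu]; ext <;> simp <;> omega)
    left
    have hpe : G.s (G.comp p e) = G.r x := by rw [G.s_comp p e hs]; exact hs'
    have hc' : G.comp (G.comp p e) x = G.comp mu nu := by
      rw [G.comp_assoc p e x hs hs', hc]
    have hm2nu : G.s m2 = G.r nu := by
      rw [← G.s_comp m1 m2 hm3, hm4]; exact hcomp
    have hc'' : G.comp m1 (G.comp m2 nu) = G.comp mu nu := by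
      rw [← G.comp_assoc m1 m2 nu hm3 hm2nu, hm4]
    have hdpe : G.d (G.comp p e) = (0, n+1) := by
      rw [G.d_comp p e hs, hd, he]; rfl
    have heq := factor_eq hpe (by rw [G.r_comp m2 nu hm2nu]; exact hm3)
      (hc'.trans hc''.symm) (by rw [hdpe, hm1])
    -- comp p e = m1, x = comp m2 nu; so mu = m1 m2 = (p e) m2
    have hsem2 : G.s e = G.r m2 := by
      rw [← heq.1, G.s_comp p e hs] at hm3; exact hm3
    refine ⟨p, m2, hd, hs, hsem2, ?_⟩
    rw [← hm4, ← heq.1, G.comp_assoc p e m2 hs hsem2]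
  · -- occurrence inside nu
    right
    have hnk' : k ≤ n := by omega
    obtain ⟨n1, n2, hn1, hn2, hn3, hn4⟩ := factor_exists nu (0, n - k) (0, l - (n - k))
      (by rw [hnu]; ext <;> simp <;> omega)
    have hmun1 : G.s mu = G.r n1 := by
      rw [hcomp, ← hn4]; exact G.r_comp n1 n2 hn3
    have hc2 : G.comp (G.comp mu n1) n2 = G.comp mu nu := by
      rw [G.comp_assoc mu n1 n2 hmun1 hn3, hn4]
    have hdmn1 : G.d (G.comp mu n1) = (0, n) := by
      rw [G.d_comp mu n1 hmun1, hmu, hn1]; ext <;> simp <;> omega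
    have heq := factor_eq (by rw [G.s_comp mu n1 hmun1]; exact hn3) hex (hc2.trans hc.symm) (by rw [hdmn1, hd])
    -- comp mu n1 = p, n2 = comp e x
    refine ⟨n - k, by omega, n1, x, hn1, ?_, hs', ?_⟩
    · rw [heq.2, G.r_comp e x hs'] at hn3; exact hn3
    · rw [← hn4, heq.2]

end TwoGraph

/-- All the data of the isolated red cycle through the blue sources, bundled. -/
structure CycleSetup (G : TwoGraph) where
  lamS : G.Path
  estar : G.Path
  hred : G.IsRed lamS
  hcyc : G.IsCycle lamS
  hne : G.HasNoEntrance lamS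
  hre : G.IsRedEdge estar
  hrw : G.OnPath lamS (G.r estar)

namespace CycleSetup

variable {G : TwoGraph} (C : CycleSetup G)

/-- The length of the cycle. -/
def L : ℕ := (G.d C.lamS).2

lemma L_pos : 0 < C.L := by
  rcases Nat.eq_zero_or_pos C.L with h | h
  · exfalso
    apply C.hcyc.1
    have h1 : (G.d C.lamS).1 = 0 := C.hred
    have h2 : G.d C.lamS = ((G.d C.lamS).1, (G.d C.lamS).2) := rfl
    rw [h2, h1]; exact Prod.ext rfl h
  · exact h

lemma d_lamS : G.d C.lamS = (0, C.L) := by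
  have h : (G.d C.lamS).1 = 0 := C.hred
  exact Prod.ext h rfl

lemma d_lamS_split (m : ℕ) :
    G.d C.lamS = (0, min m C.L) + (0, C.L - min m C.L) := by
  rw [C.d_lamS, Prod.mk_add_mk]
  have h := Nat.min_le_right m C.L
  exact Prod.ext rfl (by omega)

/-- The canonical factorisation `lamS = A m ⬝ B m` with `d (A m) = (0, min m L)`. -/
noncomputable def AB (m : ℕ) : G.Path × G.Path :=
  ((G.factor C.lamS (0, min m C.L) (0, C.L - min m C.L) (C.d_lamS_split m)).exists).choose

noncomputable def A (m : ℕ) : G.Path := (C.AB m).1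
noncomputable def B (m : ℕ) : G.Path := (C.AB m).2

lemma AB_spec (m : ℕ) : G.d (C.A m) = (0, min m C.L) ∧ G.d (C.B m) = (0, C.L - min m C.L)
    ∧ G.s (C.A m) = G.r (C.B m) ∧ G.comp (C.A m) (C.B m) = C.lamS :=
  ((G.factor C.lamS (0, min m C.L) (0, C.L - min m C.L) (C.d_lamS_split m)).exists).choose_spec

lemma dA {m : ℕ} (hm : m ≤ C.L) : G.d (C.A m) = (0, m) := by
  rw [(C.AB_spec m).1, min_eq_left hm]

lemma dB {m : ℕ} (hm : m ≤ C.L) : G.d (C.B m) = (0, C.L - m) := by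
  rw [(C.AB_spec m).2.1, min_eq_left hm]

lemma sArB (m : ℕ) : G.s (C.A m) = G.r (C.B m) := (C.AB_spec m).2.2.1

lemma compAB (m : ℕ) : G.comp (C.A m) (C.B m) = C.lamS := (C.AB_spec m).2.2.2

lemma rA (m : ℕ) : G.r (C.A m) = G.r C.lamS := by
  rw [← C.compAB m]; exact (G.r_comp _ _ (C.sArB m)).symm

/-- Uniqueness of the canonical factorisation. -/
lemma A_eq {m : ℕ} (hm : m ≤ C.L) {a b : G.Path} (h1 : G.d a = (0, m))
    (h3 : G.s a = G.r b) (h4 : G.comp a b = C.lamS) : a = C.A m ∧ b = C.B m :=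
  TwoGraph.factor_eq h3 (C.sArB m) (h4.trans (C.compAB m).symm) (by rw [h1, C.dA hm])

lemma A_zero : C.A 0 = G.r C.lamS := by
  have := C.A_eq (Nat.zero_le _) (a := G.r C.lamS) (b := C.lamS)
    (by rw [G.d_r]; rfl)
    (by rw [TwoGraph.vertex_s (G.vertex_r' _)])
    (G.id_comp C.lamS)
  exact this.1.symm

lemma A_L : C.A C.L = C.lamS := by
  have := C.A_eq (le_refl _) (a := C.lamS) (b := G.s C.lamS)
    C.d_lamS
    (by rw [TwoGraph.vertex_r (G.vertex_s' _)])
    (G.comp_id C.lamS)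
  rw [← this.1]

/-- The vertices along the cycle, indexed cyclically. -/
noncomputable def vv (m : ℕ) : G.Path := G.s (C.A (m % C.L))

lemma vv_mod (a : ℕ) : C.vv (a % C.L) = C.vv a := by
  unfold vv; rw [Nat.mod_mod_of_dvd a dvd_rfl]

lemma vv_add_mod (a b : ℕ) : C.vv (a % C.L + b) = C.vv (a + b) := by
  unfold vv; rw [Nat.mod_add_mod]

lemma vv_lt {m : ℕ} (hm : m < C.L) : C.vv m = G.s (C.A m) := by
  unfold vv; rw [Nat.mod_eq_of_lt hm]

lemma vv_zero : C.vv 0 = G.s C.lamS := by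
  rw [C.vv_lt C.L_pos, C.A_zero, TwoGraph.vertex_s (G.vertex_r' _), C.hcyc.2.1]

lemma vv_le {m : ℕ} (hm : m ≤ C.L) : C.vv m = G.s (C.A m) := by
  rcases lt_or_eq_of_le hm with h | h
  · exact C.vv_lt h
  · subst h
    rw [C.A_L]
    unfold vv; rw [Nat.mod_self, C.A_zero, TwoGraph.vertex_s (G.vertex_r' _), C.hcyc.2.1]

lemma vv_vertex (m : ℕ) : G.IsVertex (C.vv m) := G.d_s _

lemma edge_step {m : ℕ} (hm : m < C.L) {e : G.Path} (he : G.d e = (0, 1))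
    (hre : G.r e = C.vv m) :
    G.comp (C.A m) e = C.A (m + 1) ∧ G.s e = C.vv (m + 1) := by
  have hsA : G.s (C.A m) = G.r e := by rw [hre, C.vv_lt hm]
  have hd : G.d (G.comp (C.A m) e) = (0, m + 1) := by
    rw [G.d_comp _ _ hsA, C.dA (le_of_lt hm), he]; rfl
  have hle : (0, m + 1) ≤ G.d C.lamS := by
    rw [C.d_lamS]; exact Prod.mk_le_mk.2 ⟨le_refl _, hm⟩
  have hr : G.r (G.comp (C.A m) e) = G.r C.lamS := by
    rw [G.r_comp _ _ hsA]; exact C.rA m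
  obtain ⟨nu, hsnu, hcnu⟩ := C.hne (0, m + 1) hle _ hd hr
  have := C.A_eq hm (a := G.comp (C.A m) e) (b := nu) hd hsnu hcnu
  refine ⟨this.1, ?_⟩
  rw [← G.s_comp _ _ hsA, this.1, C.vv_le hm]

lemma edge_unique {m : ℕ} (hm : m < C.L) {e e' : G.Path} (he : G.d e = (0, 1))
    (he' : G.d e' = (0, 1)) (hre : G.r e = C.vv m) (hre' : G.r e' = C.vv m) :
    e = e' := by
  have h1 := (C.edge_step hm he hre).1
  have h2 := (C.edge_step hm he' hre').1
  exact TwoGraph.comp_cancel_left (by rw [hre, C.vv_lt hm]) (by rw [hre', C.vv_lt hm])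
    (h1.trans h2.symm)

lemma exists_edge {m : ℕ} (hm : m < C.L) :
    ∃ e, G.d e = (0, 1) ∧ G.r e = C.vv m ∧ G.s e = C.vv (m + 1) := by
  obtain ⟨e, x, h1, h2, h3, h4⟩ := TwoGraph.factor_exists (C.B m) (0, 1) (0, C.L - m - 1)
    (by rw [C.dB (le_of_lt hm)]; ext <;> simp <;> omega)
  have hr : G.r e = C.vv m := by
    rw [← G.r_comp e x h3, h4, ← C.sArB m, C.vv_lt hm]
  exact ⟨e, h1, hr, (C.edge_step hm h1 hr).2⟩

/-- The fundamental walk lemma: uniqueness and endpoint of red paths along the cycle. -/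
lemma walk : ∀ (k m : ℕ), m < C.L → ∀ ρ, G.d ρ = (0, k) → G.r ρ = C.vv m →
    G.s ρ = C.vv (m + k) ∧ ∀ ρ', G.d ρ' = (0, k) → G.r ρ' = C.vv m → ρ' = ρ := by
  intro k
  induction k with
  | zero =>
    intro m hm ρ hd hr
    have hv : G.IsVertex ρ := hd
    have hρ : ρ = C.vv m := by rw [← TwoGraph.vertex_r hv, hr]
    constructor
    · rw [TwoGraph.vertex_s hv, hρ, Nat.add_zero]
    · intro ρ' hd' hr'
      have hv' : G.IsVertex ρ' := hd'
      rw [hρ, ← TwoGraph.vertex_r hv', hr']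
  | succ k ih =>
    intro m hm ρ hd hr
    obtain ⟨e, x, h1, h2, h3, h4⟩ := TwoGraph.factor_exists ρ (0, 1) (0, k)
      (by rw [hd, Prod.mk_add_mk]; exact Prod.ext rfl (by omega))
    have hre : G.r e = C.vv m := by rw [← G.r_comp e x h3, h4, hr]
    have hse := (C.edge_step hm h1 hre).2
    have hrx : G.r x = C.vv ((m + 1) % C.L) := by rw [← h3, hse, C.vv_mod]
    have hm' : (m + 1) % C.L < C.L := Nat.mod_lt _ C.L_pos
    obtain ⟨hsx, huniq⟩ := ih ((m + 1) % C.L) hm' x h2 hrx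
    constructor
    · rw [← h4, G.s_comp e x h3, hsx, C.vv_add_mod]
      congr 1; omega
    · intro ρ' hd' hr'
      obtain ⟨e', x', h1', h2', h3', h4'⟩ := TwoGraph.factor_exists ρ' (0, 1) (0, k)
        (by rw [hd', Prod.mk_add_mk]; exact Prod.ext rfl (by omega))
      have hre' : G.r e' = C.vv m := by rw [← G.r_comp e' x' h3', h4', hr']
      have hee : e' = e := C.edge_unique hm h1' h1 hre' hre
      have hrx' : G.r x' = C.vv ((m + 1) % C.L) := by
        rw [← h3', hee, hse, C.vv_mod]
      have := huniq x' h2' hrx'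
      rw [← h4', ← h4, hee, this]

lemma vv_ne_zero {t : ℕ} (ht : 0 < t) (ht' : t < C.L) : C.vv t ≠ C.vv 0 := by
  rw [C.vv_lt ht', C.vv_zero]
  apply C.hcyc.2.2 (C.A t) ⟨C.B t, C.sArB t, C.compAB t⟩
  · rw [C.dA (le_of_lt ht')]
    intro h
    have := congrArg Prod.snd h
    simp at this; omega
  · rw [C.dA (le_of_lt ht'), C.d_lamS]
    intro h
    have := congrArg Prod.snd h
    simp at this; omega

lemma vv_shift {p q : ℕ} (h : C.vv p = C.vv q) (i : ℕ) : C.vv (p + i) = C.vv (q + i) := by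
  induction i with
  | zero => simpa using h
  | succ i ih =>
    have hp' : (p + i) % C.L < C.L := Nat.mod_lt _ C.L_pos
    have hq' : (q + i) % C.L < C.L := Nat.mod_lt _ C.L_pos
    obtain ⟨e, he1, he2, he3⟩ := C.exists_edge hp'
    obtain ⟨f, hf1, hf2, hf3⟩ := C.exists_edge hq'
    have hef : e = f := by
      apply C.edge_unique hp' he1 hf1 he2
      rw [hf2, C.vv_mod, C.vv_mod, ih]
    have key : C.vv (p + i + 1) = C.vv (q + i + 1) := by
      rw [← C.vv_add_mod (p+i) 1, ← C.vv_add_mod (q+i) 1, ← he3, ← hf3, hef]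
    exact key

lemma vv_inj {p q : ℕ} (hp : p < C.L) (hq : q < C.L) (h : C.vv p = C.vv q) : p = q := by
  by_contra hne
  have key : ∀ a b : ℕ, a < b → b < C.L → C.vv a = C.vv b → False := by
    intro a b hab hb hvab
    have := C.vv_shift hvab (C.L - b)
    have hL : b + (C.L - b) = C.L := by omega
    rw [hL] at this
    have hvL : C.vv C.L = C.vv 0 := by
      unfold vv; rw [Nat.mod_self, Nat.zero_mod]
    rw [hvL] at this
    have ht : 0 < a + (C.L - b) := by omega
    have ht' : a + (C.L - b) < C.L := by omega
    exact C.vv_ne_zero ht ht' this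
  rcases Nat.lt_or_ge p q with h' | h'
  · exact key p q h' hq h
  · exact key q p (by omega) hp h.symm

lemma idx_of_onPath {v : G.Path} (h : G.OnPath C.lamS v) :
    ∃ m, m < C.L ∧ C.vv m = v := by
  obtain ⟨hv, mu, ⟨nu, hsnu, hcnu⟩, hsmu⟩ := h
  have hd : G.d C.lamS = G.d mu + G.d nu := by rw [← hcnu]; exact G.d_comp mu nu hsnu
  have h1 : (G.d mu).1 = 0 := by
    have h' := congrArg Prod.fst hd
    rw [C.d_lamS] at h'; simp [Prod.fst_add] at h'; omega
  have h2 : (G.d mu).2 ≤ C.L := by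
    have h' := congrArg Prod.snd hd
    rw [C.d_lamS] at h'; simp [Prod.snd_add] at h'; omega
  have hmuA : mu = C.A (G.d mu).2 :=
    (C.A_eq h2 (a := mu) (b := nu) (Prod.ext h1 rfl) hsnu hcnu).1
  refine ⟨(G.d mu).2 % C.L, Nat.mod_lt _ C.L_pos, ?_⟩
  rw [C.vv_mod, C.vv_le h2, ← hmuA, hsmu]

lemma occ_of_long : ∀ (i k m : ℕ), m < C.L → ∀ ρ, G.d ρ = (0, k) → G.r ρ = C.vv m →
    i < k → C.vv (m + i) = G.r C.estar → G.OccAt ρ C.estar i := by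
  intro i
  induction i with
  | zero =>
    intro k m hm ρ hd hr hik hhit
    obtain ⟨e, x, h1, h2, h3, h4⟩ := TwoGraph.factor_exists ρ (0, 1) (0, k - 1)
      (by rw [hd, Prod.mk_add_mk]; exact Prod.ext rfl (by omega))
    have hre : G.r e = C.vv m := by rw [← G.r_comp e x h3, h4, hr]
    have hhit' : C.vv m = G.r C.estar := by rw [← hhit, Nat.add_zero]
    have heq : e = C.estar := C.edge_unique hm h1 C.hre hre hhit'.symm
    refine ⟨C.vv m, x, C.vv_vertex m, ?_, ?_, ?_⟩
    · rw [TwoGraph.vertex_s (C.vv_vertex m)]; exact hhit'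
    · rw [← heq]; exact h3
    · rw [← heq, ← h4]
      have hvr : C.vv m = G.r (G.comp e x) := by rw [G.r_comp e x h3, hre]
      rw [hvr, G.id_comp]
  | succ i ih =>
    intro k m hm ρ hd hr hik hhit
    obtain ⟨e, x, h1, h2, h3, h4⟩ := TwoGraph.factor_exists ρ (0, 1) (0, k - 1)
      (by rw [hd, Prod.mk_add_mk]; exact Prod.ext rfl (by omega))
    have hre : G.r e = C.vv m := by rw [← G.r_comp e x h3, h4, hr]
    have hse := (C.edge_step hm h1 hre).2
    have hrx : G.r x = C.vv ((m + 1) % C.L) := by rw [← h3, hse, C.vv_mod]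
    have hocc := ih (k - 1) ((m + 1) % C.L) (Nat.mod_lt _ C.L_pos) x h2 hrx (by omega)
      (by rw [C.vv_add_mod, show m + 1 + i = m + (i + 1) by omega]; exact hhit)
    obtain ⟨p, ξ, hp1, hp2, hp3, hp4⟩ := hocc
    have hcond : G.s p = G.r (G.comp C.estar ξ) := by rw [G.r_comp _ _ hp3]; exact hp2
    have hsep : G.s e = G.r p := by rw [h3, ← hp4, G.r_comp p _ hcond]
    refine ⟨G.comp e p, ξ, ?_, ?_, hp3, ?_⟩
    · rw [G.d_comp e p hsep, h1, hp1, Prod.mk_add_mk]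
      exact Prod.ext rfl (by omega)
    · rw [G.s_comp e p hsep]; exact hp2
    · rw [G.comp_assoc e p _ hsep hcond, hp4, h4]

lemma no_cycle {m : ℕ} (hm : m < C.L) {τ : G.Path} (hred : G.IsRed τ)
    (hr : G.r τ = C.vv m) (hs : G.s τ = G.r τ)
    (hocc : G.occCount τ C.estar = 0) : G.d τ = 0 := by
  have h1 : (G.d τ).1 = 0 := hred
  have hd : G.d τ = (0, (G.d τ).2) := Prod.ext h1 rfl
  set k := (G.d τ).2 with hk
  by_contra hne
  have hkpos : 0 < k := by
    rcases Nat.eq_zero_or_pos k with h0 | h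
    · exact absurd (by rw [hd, h0]; rfl) hne
    · exact h
  have hsv := (C.walk k m hm τ hd hr).1
  have hmm : (m + k) % C.L = m := by
    have hvv : C.vv ((m + k) % C.L) = C.vv m := by rw [C.vv_mod, ← hsv, hs, hr]
    exact C.vv_inj (Nat.mod_lt _ C.L_pos) hm hvv
  have hdvd : C.L ∣ k := by
    have hme : m % C.L = (m + k) % C.L := by rw [hmm, Nat.mod_eq_of_lt hm]
    have := (Nat.modEq_iff_dvd' (Nat.le_add_right m k)).1 hme
    simpa using this
  have hkL : C.L ≤ k := Nat.le_of_dvd hkpos hdvd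
  obtain ⟨t, ht, hvt⟩ := C.idx_of_onPath C.hrw
  have hex : ∃ i, i < C.L ∧ C.vv (m + i) = G.r C.estar := by
    rcases le_or_gt m t with h | h
    · exact ⟨t - m, by omega, by rw [show m + (t - m) = t by omega]; exact hvt⟩
    · refine ⟨t + C.L - m, by omega, ?_⟩
      rw [show m + (t + C.L - m) = t + C.L by omega, ← hvt,
        ← C.vv_mod (t + C.L), Nat.add_mod_right, C.vv_mod]
  obtain ⟨i, hiL, hhit⟩ := hex
  exact (TwoGraph.not_occ_of_occCount_zero hocc i)
    (C.occ_of_long i k m hm τ hd hr (by omega) hhit)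

lemma avoid_unique_le {m : ℕ} (hm : m < C.L) {ρ ρ' : G.Path} {k k' : ℕ}
    (hd : G.d ρ = (0, k)) (hd' : G.d ρ' = (0, k')) (hkk : k ≤ k')
    (hr : G.r ρ = C.vv m) (hr' : G.r ρ' = C.vv m) (hss : G.s ρ = G.s ρ')
    (hocc' : G.occCount ρ' C.estar = 0) : ρ' = ρ := by
  obtain ⟨ρ₁, τ, h1, h2, h3, h4⟩ := TwoGraph.factor_exists ρ' (0, k) (0, k' - k)
    (by rw [hd', Prod.mk_add_mk]; exact Prod.ext rfl (by omega))
  have hrρ₁ : G.r ρ₁ = C.vv m := by rw [← G.r_comp ρ₁ τ h3, h4, hr']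
  have hρ₁ : ρ₁ = ρ := (C.walk k m hm ρ hd hr).2 ρ₁ h1 hrρ₁
  have hsρ : G.s ρ = C.vv (m + k) := (C.walk k m hm ρ hd hr).1
  have hrτ : G.r τ = C.vv ((m + k) % C.L) := by
    rw [← h3, hρ₁, hsρ, C.vv_mod]
  have hsτ : G.s τ = G.s ρ := by rw [hss, ← h4, G.s_comp ρ₁ τ h3]
  have hrτ' : G.s ρ = G.r τ := by rw [← hρ₁]; exact h3
  have hsτr : G.s τ = G.r τ := hsτ.trans hrτ'
  have hτred : G.IsRed τ := by show (G.d τ).1 = 0; rw [h2]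
  have hτocc : G.occCount τ C.estar = 0 := by
    apply TwoGraph.occCount_zero_of_not_occ
    intro n hn
    have hocc2 := TwoGraph.occ_suffix (mu := ρ₁) (k := k)
      (by rw [hρ₁]; exact hd) h3 hn
    rw [h4] at hocc2
    exact (TwoGraph.not_occ_of_occCount_zero hocc' (k + n)) hocc2
  have hτ0 : G.d τ = 0 := C.no_cycle (Nat.mod_lt _ C.L_pos) hτred hrτ hsτr hτocc
  have hτv : τ = G.s ρ := by rw [← TwoGraph.vertex_r hτ0, ← hρ₁]; exact h3.symm
  rw [← h4, hρ₁, hτv, G.comp_id]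

lemma avoid_unique {m : ℕ} (hm : m < C.L) {ρ ρ' : G.Path}
    (hred : G.IsRed ρ) (hred' : G.IsRed ρ')
    (hr : G.r ρ = C.vv m) (hr' : G.r ρ' = C.vv m)
    (hss : G.s ρ = G.s ρ') (hocc : G.occCount ρ C.estar = 0)
    (hocc' : G.occCount ρ' C.estar = 0) : ρ = ρ' := by
  have e1 : (G.d ρ).1 = 0 := hred
  have e2 : (G.d ρ').1 = 0 := hred'
  have hd : G.d ρ = (0, (G.d ρ).2) := Prod.ext e1 rfl
  have hd' : G.d ρ' = (0, (G.d ρ').2) := Prod.ext e2 rfl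
  rcases le_total (G.d ρ).2 (G.d ρ').2 with h | h
  · exact (C.avoid_unique_le hm hd hd' h hr hr' hss hocc').symm
  · exact C.avoid_unique_le hm hd' hd h hr' hr hss.symm hocc

lemma nest_range {m : ℕ} (hm : m < C.L) {ρ ρ' : G.Path} {k k' : ℕ}
    (hd : G.d ρ = (0, k)) (hd' : G.d ρ' = (0, k')) (hkk : k ≤ k')
    (hr : G.r ρ = C.vv m) (hr' : G.r ρ' = C.vv m) :
    ∃ σ, G.d σ = (0, k' - k) ∧ G.s ρ = G.r σ ∧ G.comp ρ σ = ρ' ∧ G.s σ = G.s ρ' := by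
  obtain ⟨ρ₁, σ, h1, h2, h3, h4⟩ := TwoGraph.factor_exists ρ' (0, k) (0, k' - k)
    (by rw [hd', Prod.mk_add_mk]; exact Prod.ext rfl (by omega))
  have hrρ₁ : G.r ρ₁ = C.vv m := by rw [← G.r_comp ρ₁ σ h3, h4, hr']
  have hρ₁ : ρ₁ = ρ := (C.walk k m hm ρ hd hr).2 ρ₁ h1 hrρ₁
  refine ⟨σ, h2, by rw [← hρ₁]; exact h3, by rw [← hρ₁]; exact h4, ?_⟩
  rw [← h4, G.s_comp ρ₁ σ h3]

lemma nest_source {m₁ m₂ : ℕ} (hm₁ : m₁ < C.L) (hm₂ : m₂ < C.L) {ρ ρ' : G.Path}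
    {k k' : ℕ} (hd : G.d ρ = (0, k)) (hd' : G.d ρ' = (0, k')) (hkk : k ≤ k')
    (hr : G.r ρ = C.vv m₁) (hr' : G.r ρ' = C.vv m₂) (hss : G.s ρ = G.s ρ') :
    ∃ σ, G.d σ = (0, k' - k) ∧ G.s σ = G.r ρ ∧ G.comp σ ρ = ρ' := by
  obtain ⟨σ, ρ₂, h1, h2, h3, h4⟩ := TwoGraph.factor_exists ρ' (0, k' - k) (0, k)
    (by rw [hd', Prod.mk_add_mk]; exact Prod.ext rfl (by omega))
  have hrσ : G.r σ = C.vv m₂ := by rw [← G.r_comp σ ρ₂ h3, h4, hr']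
  have hsσ : G.s σ = C.vv (m₂ + (k' - k)) := (C.walk (k' - k) m₂ hm₂ σ h1 hrσ).1
  have hsρ' : G.s ρ' = C.vv (m₂ + k') := (C.walk k' m₂ hm₂ ρ' hd' hr').1
  have hsρ : G.s ρ = C.vv (m₁ + k) := (C.walk k m₁ hm₁ ρ hd hr).1
  have hijeq : (m₁ + k) % C.L = (m₂ + k') % C.L := by
    apply C.vv_inj (Nat.mod_lt _ C.L_pos) (Nat.mod_lt _ C.L_pos)
    rw [C.vv_mod, C.vv_mod, ← hsρ, ← hsρ', hss]
  have hmod : (m₂ + (k' - k)) % C.L = m₁ := by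
    have h5 : (m₂ + (k' - k) + k) % C.L = (m₁ + k) % C.L := by
      rw [show m₂ + (k' - k) + k = m₂ + k' by omega, hijeq]
    have h6 : (m₂ + (k' - k)) % C.L = m₁ % C.L :=
      Nat.ModEq.add_right_cancel' k h5
    rw [h6, Nat.mod_eq_of_lt hm₁]
  have hrρ₂ : G.r ρ₂ = C.vv m₁ := by
    rw [← h3, hsσ, ← C.vv_mod (m₂ + (k' - k)), hmod]
  have hρ₂ : ρ₂ = ρ := (C.walk k m₁ hm₁ ρ hd hr).2 ρ₂ h2 hrρ₂
  refine ⟨σ, h1, ?_, ?_⟩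
  · rw [← hρ₂]; exact h3
  · rw [← hρ₂]; exact h4

end CycleSetup


section CKLemmas

variable {A : Type*} [CStarAlgebra A] {G : TwoGraph}

namespace CKFamily

variable (F : CKFamily G A)

lemma S_src (p : G.Path) : F.S p * F.S (G.s p) = F.S p := by
  rw [F.ck2 p (G.s p) (TwoGraph.vertex_r (G.vertex_s' p)).symm, G.comp_id]

lemma S_rng (p : G.Path) : F.S (G.r p) * F.S p = F.S p := by
  rw [F.ck2 (G.r p) p (TwoGraph.vertex_s (G.vertex_r' p)), G.id_comp]

lemma S_pisom (p : G.Path) : F.S p * star (F.S p) * F.S p = F.S p := by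
  rw [mul_assoc, F.ck3 p, F.S_src]

lemma star_pisom (p : G.Path) : star (F.S p) * F.S p * star (F.S p) = star (F.S p) := by
  have h := congrArg star (F.S_pisom p)
  rw [star_mul, star_mul, star_star] at h
  rw [mul_assoc]; exact h

lemma leSet_finite (hfin : G.FinitePaths) (n : ℕ × ℕ) (v : G.Path) :
    {lam : G.Path | lam ∈ G.LeSet n ∧ G.r lam = v}.Finite := by
  have h1 : {p : G.Path | G.d p ≤ n}.Finite := by
    have hsub : {p : G.Path | G.d p ≤ n} ⊆ ⋃ m ∈ Set.Iic n, {p : G.Path | G.d p = m} := by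
      intro p hp; exact Set.mem_biUnion hp rfl
    exact ((Set.finite_Iic n).biUnion (fun m _ => hfin m)).subset hsub
  exact h1.subset (fun p hp => hp.1.1)

lemma proj_orth (hfin : G.FinitePaths) {v : G.Path} (hv : G.IsVertex v)
    (n : ℕ × ℕ) {β η : G.Path} (hβ : β ∈ G.LeSet n ∧ G.r β = v)
    (hη : η ∈ G.LeSet n ∧ G.r η = v) (hne : β ≠ η) :
    (F.S β * star (F.S β)) * (F.S η * star (F.S η)) = 0 := by
  classical
  letI := CStarAlgebra.spectralOrder A
  haveI := CStarAlgebra.spectralOrderedRing A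
  set T := {lam : G.Path | lam ∈ G.LeSet n ∧ G.r lam = v} with hT
  have hTfin : T.Finite := leSet_finite hfin n v
  set p : G.Path → A := fun lam => F.S lam * star (F.S lam) with hp
  have hsum : F.S v = ∑ lam ∈ hTfin.toFinset, p lam := by
    rw [F.ck4 v n hv]; exact finsum_mem_eq_finite_toFinset_sum _ hTfin
  have hsa : ∀ lam, star (p lam) = p lam := fun lam => by
    simp only [hp, star_mul, star_star]
  have hidem : ∀ lam, p lam * p lam = p lam := fun lam => by
    simp only [hp]
    calc F.S lam * star (F.S lam) * (F.S lam * star (F.S lam))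
        = (F.S lam * star (F.S lam) * F.S lam) * star (F.S lam) := by rw [← mul_assoc]
      _ = F.S lam * star (F.S lam) := by rw [F.S_pisom]
  have hpv : ∀ lam, lam ∈ T → p lam * F.S v = p lam ∧ F.S v * p lam = p lam := by
    intro lam hlam
    have hr : G.r lam = v := hlam.2
    have hvl : F.S v * F.S lam = F.S lam := by rw [← hr]; exact F.S_rng lam
    constructor
    · simp only [hp]
      rw [mul_assoc]
      congr 1
      calc star (F.S lam) * F.S v = star (F.S lam) * star (F.S v) := by
            rw [F.ck1_sa v hv]
        _ = star (F.S v * F.S lam) := (star_mul _ _).symm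
        _ = star (F.S lam) := by rw [hvl]
    · simp only [hp]
      rw [← mul_assoc, hvl]
  have hβT : β ∈ hTfin.toFinset := hTfin.mem_toFinset.2 hβ
  have hηT : η ∈ hTfin.toFinset := hTfin.mem_toFinset.2 hη
  have key : ∑ lam ∈ hTfin.toFinset.erase β, p β * p lam * p β = 0 := by
    have h1 : p β = ∑ lam ∈ hTfin.toFinset, p β * p lam * p β := by
      calc p β = p β * F.S v * p β := by rw [(hpv β hβ).1, hidem β]
        _ = ∑ lam ∈ hTfin.toFinset, p β * p lam * p β := by
            rw [hsum, Finset.mul_sum, Finset.sum_mul]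
    have h2 : ∑ lam ∈ hTfin.toFinset, p β * p lam * p β
        = p β * p β * p β + ∑ lam ∈ hTfin.toFinset.erase β, p β * p lam * p β :=
      (Finset.add_sum_erase _ _ hβT).symm
    have h3 : p β * p β * p β = p β := by rw [hidem β, hidem β]
    rw [h2, h3] at h1
    exact (left_eq_add.1 h1)
  have hnonneg : ∀ lam ∈ hTfin.toFinset.erase β, 0 ≤ p β * p lam * p β := by
    intro lam _
    have hrw : p β * p lam * p β = star (p lam * p β) * (p lam * p β) := by
      have e1 : star (p lam * p β) = p β * p lam := by rw [star_mul, hsa, hsa]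
      rw [e1]
      calc p β * p lam * p β = p β * (p lam * p lam) * p β := by rw [hidem lam]
        _ = p β * p lam * (p lam * p β) := by noncomm_ring
    rw [hrw]
    exact star_mul_self_nonneg _
  have hterm : p β * p η * p β = 0 :=
    (Finset.sum_eq_zero_iff_of_nonneg hnonneg).1 key η (Finset.mem_erase.2 ⟨hne.symm, hηT⟩)
  have h0 : p η * p β = 0 := by
    have hz : star (p η * p β) * (p η * p β) = 0 := by
      have e1 : star (p η * p β) = p β * p η := by rw [star_mul, hsa, hsa]
      rw [e1]
      calc p β * p η * (p η * p β) = p β * (p η * p η) * p β := by noncomm_ring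
        _ = p β * p η * p β := by rw [hidem η]
        _ = 0 := hterm
    exact (CStarRing.star_mul_self_eq_zero_iff _).1 hz
  show p β * p η = 0
  have e2 : p β * p η = star (p η * p β) := by rw [star_mul, hsa, hsa]
  rw [e2, h0, star_zero]

end CKFamily

lemma TwoGraph.mem_leSet_of_inY {G : TwoGraph} {β : G.Path} (hβ : G.InY β) {n : ℕ}
    (hn : (G.d β).1 ≤ n) : β ∈ G.LeSet (n, 0) := by
  constructor
  · exact Prod.le_def.2 ⟨hn, le_of_eq hβ.1⟩
  · intro μ hsμ hne hdle
    have hdc : G.d (G.comp β μ) = G.d β + G.d μ := G.d_comp β μ hsμ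
    rcases Nat.eq_zero_or_pos (G.d μ).1 with h0 | hpos
    · have l2 : (G.d (G.comp β μ)).2 ≤ 0 := (Prod.le_def.1 hdle).2
      rw [hdc, Prod.snd_add] at l2
      have h2 : (G.d μ).2 = 0 := by omega
      have hdμ : G.d μ = 0 := by
        have hh : G.d μ = ((G.d μ).1, (G.d μ).2) := rfl
        rw [hh, h0, h2]; rfl
      have hμ : μ = G.s β := by rw [← TwoGraph.vertex_r hdμ, ← hsμ]
      exact hne (by rw [hμ, G.comp_id])
    · obtain ⟨e, x, h1, h2, h3, h4⟩ := TwoGraph.factor_exists μ (1, 0)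
        ((G.d μ).1 - 1, (G.d μ).2)
        (by rw [Prod.mk_add_mk]; exact Prod.ext (by omega) (by omega))
      exact hβ.2.2 e h1 (by rw [← G.r_comp e x h3, h4]; exact hsμ.symm)

namespace CKFamily

variable (F : CKFamily G A)

lemma S_orth (hfin : G.FinitePaths) {β η : G.Path} (hβ : G.InY β) (hη : G.InY η)
    (hne : β ≠ η) : star (F.S β) * F.S η = 0 := by
  by_cases hr : G.r β = G.r η
  · have hβm : β ∈ G.LeSet (max (G.d β).1 (G.d η).1, 0) :=
      TwoGraph.mem_leSet_of_inY hβ (le_max_left _ _)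
    have hηm : η ∈ G.LeSet (max (G.d β).1 (G.d η).1, 0) :=
      TwoGraph.mem_leSet_of_inY hη (le_max_right _ _)
    have horth := F.proj_orth hfin (G.vertex_r' β) (max (G.d β).1 (G.d η).1, 0)
      ⟨hβm, rfl⟩ ⟨hηm, hr.symm⟩ hne
    calc star (F.S β) * F.S η
        = (star (F.S β) * F.S β * star (F.S β)) * (F.S η * star (F.S η) * F.S η) := by
          rw [F.star_pisom, F.S_pisom]
      _ = star (F.S β) * ((F.S β * star (F.S β)) * (F.S η * star (F.S η))) * F.S η := by
          noncomm_ring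
      _ = 0 := by rw [horth, mul_zero, zero_mul]
  · have e1 : star (F.S β) * F.S (G.r β) = star (F.S β) := by
      rw [← F.ck1_sa _ (G.vertex_r' β), ← star_mul, F.S_rng]
    have e2 : F.S (G.r η) * F.S η = F.S η := F.S_rng η
    calc star (F.S β) * F.S η
        = (star (F.S β) * F.S (G.r β)) * (F.S (G.r η) * F.S η) := by rw [e1, e2]
      _ = star (F.S β) * (F.S (G.r β) * F.S (G.r η)) * F.S η := by noncomm_ring
      _ = 0 := by
          rw [F.ck1_orth _ _ (G.vertex_r' β) (G.vertex_r' η) hr, mul_zero, zero_mul]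

lemma edge_full (C : CycleSetup G) (hfin : G.FinitePaths) {m : ℕ} (hm : m < C.L)
    {e : G.Path} (hd : G.d e = (0, 1)) (hre : G.r e = C.vv m) :
    F.S e * star (F.S e) = F.S (C.vv m) := by
  have hset : {lam : G.Path | lam ∈ G.LeSet (0, 1) ∧ G.r lam = C.vv m} = {e} := by
    ext lam
    simp only [Set.mem_setOf_eq, Set.mem_singleton_iff]
    constructor
    · rintro ⟨⟨hle, hmax⟩, hr⟩
      have h1 : (G.d lam).1 = 0 := by
        have := (Prod.le_def.1 hle).1; simpa using this
      have h2 : (G.d lam).2 ≤ 1 := by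
        have := (Prod.le_def.1 hle).2; simpa using this
      rcases Nat.lt_or_ge (G.d lam).2 1 with h0 | h1'
      · exfalso
        have hdlam : G.d lam = 0 := by
          have e0 : (G.d lam).2 = 0 := by omega
          have hh : G.d lam = ((G.d lam).1, (G.d lam).2) := rfl
          rw [hh, h1, e0]; rfl
        have hlam : lam = C.vv m := by rw [← TwoGraph.vertex_r hdlam, hr]
        have hslam : G.s lam = G.r e := by rw [TwoGraph.vertex_s hdlam, hlam, hre]
        have hclam : G.comp lam e = e := by rw [hlam, ← hre, G.id_comp]
        have hne : G.comp lam e ≠ lam := by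
          rw [hclam]; intro hh
          rw [← hh, hd] at hdlam
          exact absurd (congrArg Prod.snd hdlam) (by simp)
        exact hmax e hslam hne (by rw [hclam, hd])
      · have hdl : G.d lam = (0, 1) := by
          have hh : G.d lam = ((G.d lam).1, (G.d lam).2) := rfl
          rw [hh, h1]
          exact Prod.ext rfl (by omega)
        exact C.edge_unique hm hdl hd hr hre
    · rintro rfl
      refine ⟨⟨by rw [hd], ?_⟩, hre⟩
      intro μ hsμ hne hdle
      have hdc : G.d (G.comp lam μ) = G.d lam + G.d μ := G.d_comp lam μ hsμ
      have hμ0 : G.d μ = 0 := by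
        rw [hdc, hd] at hdle
        have l1 : ((0, 1) + G.d μ).1 ≤ 0 := (Prod.le_def.1 hdle).1
        have l2 : ((0, 1) + G.d μ).2 ≤ 1 := (Prod.le_def.1 hdle).2
        simp only [Prod.fst_add, Prod.snd_add] at l1 l2
        have hh : G.d μ = ((G.d μ).1, (G.d μ).2) := rfl
        rw [hh]
        have hfst : (G.d μ).1 = 0 := by simpa using l1
        have h2' : (G.d μ).2 = 0 := by
          have hsnd : (1 : ℕ) + (G.d μ).2 ≤ 1 := by simpa using l2
          omega
        rw [hfst, h2']; rfl
      have hμ : μ = G.s lam := by rw [← TwoGraph.vertex_r hμ0, ← hsμ]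
      exact hne (by rw [hμ, G.comp_id])
  have hck := F.ck4 (C.vv m) (0, 1) (C.vv_vertex m)
  rw [hset, finsum_mem_singleton] at hck
  exact hck.symm

lemma red_full (C : CycleSetup G) (hfin : G.FinitePaths) :
    ∀ (k m : ℕ), m < C.L → ∀ ρ, G.d ρ = (0, k) → G.r ρ = C.vv m →
      F.S ρ * star (F.S ρ) = F.S (C.vv m) := by
  intro k
  induction k with
  | zero =>
    intro m hm ρ hd hr
    have hρ : ρ = C.vv m := by rw [← TwoGraph.vertex_r hd, hr]
    rw [hρ, F.ck1_sa _ (C.vv_vertex m), F.ck1_idem _ (C.vv_vertex m)]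
  | succ k ih =>
    intro m hm ρ hd hr
    obtain ⟨e, x, h1, h2, h3, h4⟩ := TwoGraph.factor_exists ρ (0, 1) (0, k)
      (by rw [hd, Prod.mk_add_mk]; exact Prod.ext rfl (by omega))
    have hre : G.r e = C.vv m := by rw [← G.r_comp e x h3, h4, hr]
    have hse := (C.edge_step hm h1 hre).2
    have hrx : G.r x = C.vv ((m + 1) % C.L) := by rw [← h3, hse, C.vv_mod]
    have hx := ih ((m + 1) % C.L) (Nat.mod_lt _ C.L_pos) x h2 hrx
    have hSr : F.S ρ = F.S e * F.S x := by rw [F.ck2 e x h3, h4]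
    rw [hSr, star_mul]
    calc F.S e * F.S x * (star (F.S x) * star (F.S e))
        = F.S e * (F.S x * star (F.S x)) * star (F.S e) := by noncomm_ring
      _ = F.S e * F.S (C.vv ((m + 1) % C.L)) * star (F.S e) := by rw [hx]
      _ = F.S e * star (F.S e) := by
          rw [show C.vv ((m + 1) % C.L) = G.s e from by rw [C.vv_mod, hse], F.S_src]
      _ = F.S (C.vv m) := F.edge_full C hfin hm h1 hre

end CKFamily

end CKLemmas

/-- The elements `θ(α,β)` form a family of matrix units, nonzero
whenever all vertex projections are nonzero. -/
theorem stmt4 {A : Type*} [CStarAlgebra A]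
    (G : TwoGraph) (hfin : G.FinitePaths) (h31 : G.Cond31)
    (lamS : G.Path) (hlamS : G.IsIsolatedRedCycle lamS)
    (hS : ∀ v, G.IsBlueSource v ↔ G.OnPath lamS v)
    (F : CKFamily G A)
    (estar : G.Path) (he1 : G.IsRedEdge estar)
    (he2 : G.IsBlueSource (G.r estar)) (he3 : G.IsBlueSource (G.s estar))
    (ν₀ : G.Path → G.Path → G.Path)
    (hν₀ : ∀ α β, G.InY α → G.InY β →
      G.IsRed (ν₀ α β) ∧ G.occCount (ν₀ α β) estar = 0 ∧
      ((G.r (ν₀ α β) = G.s α ∧ G.s (ν₀ α β) = G.s β) ∨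
       (G.r (ν₀ α β) = G.s β ∧ G.s (ν₀ α β) = G.s α)))
    (θ : G.Path → G.Path → A)
    (hθ₁ : ∀ α β, G.InY α → G.InY β → G.s (ν₀ α β) = G.s β →
      θ α β = F.S α * F.S (ν₀ α β) * star (F.S β))
    (hθ₂ : ∀ α β, G.InY α → G.InY β → G.s (ν₀ α β) = G.s α →
      θ α β = F.S α * star (F.S (ν₀ α β)) * star (F.S β)) :
    (∀ α β, G.InY α → G.InY β → star (θ α β) = θ β α) ∧
    (∀ α β η ζ, G.InY α → G.InY β → G.InY η → G.InY ζ →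
      (β = η → θ α β * θ η ζ = θ α ζ) ∧ (β ≠ η → θ α β * θ η ζ = 0)) ∧
    ((∀ v, G.IsVertex v → F.S v ≠ 0) →
      ∀ α β, G.InY α → G.InY β → θ α β ≠ 0) := by
  classical
  let C : CycleSetup G := ⟨lamS, estar, hlamS.1, hlamS.2.1, hlamS.2.2.1, he1,
    (hS (G.r estar)).mp he2⟩
  have hfinP : G.FinitePaths := hfin
  -- index of the source of a path in Y on the cycle
  have hYsrc : ∀ {α : G.Path}, G.InY α → ∃ m, m < C.L ∧ C.vv m = G.s α := by
    intro α hα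
    exact C.idx_of_onPath ((hS (G.s α)).mp hα.2)
  have dpair : ∀ {ρ : G.Path}, G.IsRed ρ → G.d ρ = (0, (G.d ρ).2) := by
    intro ρ h
    have h1 : (G.d ρ).1 = 0 := h
    exact Prod.ext h1 rfl
  have red_comp : ∀ {μ ν : G.Path}, G.IsRed μ → G.IsRed ν → G.s μ = G.r ν →
      G.IsRed (G.comp μ ν) := by
    intro μ ν hμ hν hc
    show (G.d (G.comp μ ν)).1 = 0
    rw [G.d_comp μ ν hc, Prod.fst_add]
    have a1 : (G.d μ).1 = 0 := hμ
    have a2 : (G.d ν).1 = 0 := hν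
    omega
  have occ_comp : ∀ {μ ν : G.Path}, G.IsRed μ → G.IsRed ν → G.s μ = G.r ν →
      G.occCount μ estar = 0 → G.occCount ν estar = 0 →
      G.occCount (G.comp μ ν) estar = 0 := by
    intro μ ν hμ hν hc h1 h2
    apply TwoGraph.occCount_zero_of_not_occ
    intro n hn
    rcases TwoGraph.occ_split (dpair hμ) (dpair hν) he1 hc hn with h | ⟨j, _, h⟩
    · exact TwoGraph.not_occ_of_occCount_zero h1 n h
    · exact TwoGraph.not_occ_of_occCount_zero h2 j h
  have occ_pre : ∀ {σ τ : G.Path}, G.s σ = G.r τ →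
      G.occCount (G.comp σ τ) estar = 0 → G.occCount σ estar = 0 := by
    intro σ τ hc h
    apply TwoGraph.occCount_zero_of_not_occ
    intro n hn
    exact TwoGraph.not_occ_of_occCount_zero h n (TwoGraph.occ_prefix hc hn)
  have occ_suf : ∀ {σ τ : G.Path}, G.IsRed σ → G.s σ = G.r τ →
      G.occCount (G.comp σ τ) estar = 0 → G.occCount τ estar = 0 := by
    intro σ τ hσ hc h
    apply TwoGraph.occCount_zero_of_not_occ
    intro n hn
    exact TwoGraph.not_occ_of_occCount_zero h ((G.d σ).2 + n)
      (TwoGraph.occ_suffix (dpair hσ) hc hn)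
  -- the two master lemmas identifying the theta forms
  have tdir1 : ∀ α ζ ρ, G.InY α → G.InY ζ → G.IsRed ρ → G.occCount ρ estar = 0 →
      G.r ρ = G.s α → G.s ρ = G.s ζ → F.S α * F.S ρ * star (F.S ζ) = θ α ζ := by
    intro α ζ ρ hα hζ hρred hρocc h1 h2
    obtain ⟨hν3red, hν3occ, hdir⟩ := hν₀ α ζ hα hζ
    obtain ⟨m, hm, hvm⟩ := hYsrc hα
    rcases hdir with ⟨hr3, hs3⟩ | ⟨hr3, hs3⟩
    · have hρν : ρ = ν₀ α ζ := C.avoid_unique hm hρred hν3red (h1.trans hvm.symm)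
        (hr3.trans hvm.symm) (h2.trans hs3.symm) hρocc hν3occ
      rw [hρν, hθ₁ α ζ hα hζ hs3]
    · have hcc : G.s ρ = G.r (ν₀ α ζ) := by rw [h2, hr3]
      have hcompred : G.IsRed (G.comp ρ (ν₀ α ζ)) := red_comp hρred hν3red hcc
      have h0 : G.d (G.comp ρ (ν₀ α ζ)) = 0 := by
        apply C.no_cycle hm hcompred
        · rw [G.r_comp _ _ hcc, h1, ← hvm]
        · rw [G.s_comp _ _ hcc, hs3, ← h1, G.r_comp _ _ hcc]
        · exact occ_comp hρred hν3red hcc hρocc hν3occ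
      have hdd := G.d_comp _ _ hcc
      rw [h0] at hdd
      have hρ0 : G.d ρ = 0 := by
        have c1 := congrArg Prod.fst hdd
        have c2 := congrArg Prod.snd hdd
        simp only [Prod.fst_add, Prod.snd_add, Prod.fst_zero, Prod.snd_zero] at c1 c2
        have hh : G.d ρ = ((G.d ρ).1, (G.d ρ).2) := rfl
        rw [hh, show (G.d ρ).1 = 0 by omega, show (G.d ρ).2 = 0 by omega]; rfl
      have hν0 : G.d (ν₀ α ζ) = 0 := by
        have c1 := congrArg Prod.fst hdd
        have c2 := congrArg Prod.snd hdd
        simp only [Prod.fst_add, Prod.snd_add, Prod.fst_zero, Prod.snd_zero] at c1 c2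
        have hh : G.d (ν₀ α ζ) = ((G.d (ν₀ α ζ)).1, (G.d (ν₀ α ζ)).2) := rfl
        rw [hh, show (G.d (ν₀ α ζ)).1 = 0 by omega, show (G.d (ν₀ α ζ)).2 = 0 by omega]; rfl
      have hρv : ρ = G.s α := by rw [← TwoGraph.vertex_r hρ0, h1]
      have hνv : ν₀ α ζ = G.s ζ := by rw [← TwoGraph.vertex_r hν0, hr3]
      have hsς : G.s α = G.s ζ := by
        rw [← h2, TwoGraph.vertex_s hρ0, hρv]
      have hρν : ρ = ν₀ α ζ := by rw [hρv, hνv, hsς]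
      rw [hθ₂ α ζ hα hζ hs3, F.ck1_sa (ν₀ α ζ) hν0, hρν]
  have tdir2 : ∀ α ζ ρ, G.InY α → G.InY ζ → G.IsRed ρ → G.occCount ρ estar = 0 →
      G.r ρ = G.s ζ → G.s ρ = G.s α → F.S α * star (F.S ρ) * star (F.S ζ) = θ α ζ := by
    intro α ζ ρ hα hζ hρred hρocc h1 h2
    obtain ⟨hν3red, hν3occ, hdir⟩ := hν₀ α ζ hα hζ
    rcases hdir with ⟨hr3, hs3⟩ | ⟨hr3, hs3⟩
    · -- collapse case
      obtain ⟨m, hm, hvm⟩ := hYsrc hα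
      have hcc : G.s (ν₀ α ζ) = G.r ρ := by rw [hs3, h1]
      have hcompred : G.IsRed (G.comp (ν₀ α ζ) ρ) := red_comp hν3red hρred hcc
      have h0 : G.d (G.comp (ν₀ α ζ) ρ) = 0 := by
        apply C.no_cycle hm hcompred
        · rw [G.r_comp _ _ hcc, hr3, ← hvm]
        · rw [G.s_comp _ _ hcc, h2, ← hr3, G.r_comp _ _ hcc]
        · exact occ_comp hν3red hρred hcc hν3occ hρocc
      have hdd := G.d_comp _ _ hcc
      rw [h0] at hdd
      have hρ0 : G.d ρ = 0 := by
        have c1 := congrArg Prod.fst hdd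
        have c2 := congrArg Prod.snd hdd
        simp only [Prod.fst_add, Prod.snd_add, Prod.fst_zero, Prod.snd_zero] at c1 c2
        have hh : G.d ρ = ((G.d ρ).1, (G.d ρ).2) := rfl
        rw [hh, show (G.d ρ).1 = 0 by omega, show (G.d ρ).2 = 0 by omega]; rfl
      have hν0 : G.d (ν₀ α ζ) = 0 := by
        have c1 := congrArg Prod.fst hdd
        have c2 := congrArg Prod.snd hdd
        simp only [Prod.fst_add, Prod.snd_add, Prod.fst_zero, Prod.snd_zero] at c1 c2
        have hh : G.d (ν₀ α ζ) = ((G.d (ν₀ α ζ)).1, (G.d (ν₀ α ζ)).2) := rfl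
        rw [hh, show (G.d (ν₀ α ζ)).1 = 0 by omega, show (G.d (ν₀ α ζ)).2 = 0 by omega]; rfl
      have hρv : ρ = G.s ζ := by rw [← TwoGraph.vertex_r hρ0, h1]
      have hνv : ν₀ α ζ = G.s α := by rw [← TwoGraph.vertex_r hν0, hr3]
      have hsς : G.s ζ = G.s α := by
        rw [← h2, TwoGraph.vertex_s hρ0, hρv]
      have hρν : ρ = ν₀ α ζ := by rw [hρv, hνv, hsς]
      rw [hρν, F.ck1_sa (ν₀ α ζ) hν0, hθ₁ α ζ hα hζ hs3]
    · obtain ⟨m, hm, hvm⟩ := hYsrc hζ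
      have hρν : ρ = ν₀ α ζ := C.avoid_unique hm hρred hν3red (h1.trans hvm.symm)
        (hr3.trans hvm.symm) (h2.trans hs3.symm) hρocc hν3occ
      rw [hρν, hθ₂ α ζ hα hζ hs3]
  -- part 1: star
  have hstar : ∀ α β, G.InY α → G.InY β → star (θ α β) = θ β α := by
    intro α β hα hβ
    obtain ⟨hνred, hνocc, hdir⟩ := hν₀ α β hα hβ
    rcases hdir with ⟨h1, h2⟩ | ⟨h1, h2⟩
    · rw [hθ₁ α β hα hβ h2]
      have hst : star (F.S α * F.S (ν₀ α β) * star (F.S β)) =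
          F.S β * star (F.S (ν₀ α β)) * star (F.S α) := by
        simp only [star_mul, star_star]
        rw [← mul_assoc]
      rw [hst]
      exact tdir2 β α (ν₀ α β) hβ hα hνred hνocc h1 h2
    · rw [hθ₂ α β hα hβ h2]
      have hst : star (F.S α * star (F.S (ν₀ α β)) * star (F.S β)) =
          F.S β * F.S (ν₀ α β) * star (F.S α) := by
        simp only [star_mul, star_star]
        rw [← mul_assoc]
      rw [hst]
      exact tdir1 β α (ν₀ α β) hβ hα hνred hνocc h1 h2
  -- part 2: multiplication
  have hmul : ∀ α β η ζ, G.InY α → G.InY β → G.InY η → G.InY ζ →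
      (β = η → θ α β * θ η ζ = θ α ζ) ∧ (β ≠ η → θ α β * θ η ζ = 0) := by
    intro α β η ζ hα hβ hη hζ
    constructor
    · rintro rfl
      obtain ⟨h1red, h1occ, hdir1⟩ := hν₀ α β hα hβ
      obtain ⟨h2red, h2occ, hdir2⟩ := hν₀ β ζ hβ hζ
      obtain ⟨mα, hmα, hvα⟩ := hYsrc hα
      obtain ⟨mβ, hmβ, hvβ⟩ := hYsrc hβ
      obtain ⟨mζ, hmζ, hvζ⟩ := hYsrc hζ
      have mid : ∀ X Y : A,
          (F.S α * X * star (F.S β)) * (F.S β * Y * star (F.S ζ)) =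
          F.S α * (X * (F.S (G.s β) * Y)) * star (F.S ζ) := by
        intro X Y
        calc (F.S α * X * star (F.S β)) * (F.S β * Y * star (F.S ζ))
            = F.S α * (X * ((star (F.S β) * F.S β) * Y)) * star (F.S ζ) := by
              noncomm_ring
          _ = F.S α * (X * (F.S (G.s β) * Y)) * star (F.S ζ) := by rw [F.ck3]
      have habs2 : ∀ w : G.Path, G.s w = G.s β →
          F.S (G.s β) * star (F.S w) = star (F.S w) := by
        intro w h
        have hw : F.S w * F.S (G.s β) = F.S w := by rw [← h, F.S_src]
        calc F.S (G.s β) * star (F.S w) = star (F.S w * F.S (G.s β)) := by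
              rw [star_mul, F.ck1_sa _ (G.vertex_s' β)]
          _ = star (F.S w) := by rw [hw]
      rcases hdir1 with ⟨a1, a2⟩ | ⟨a1, a2⟩ <;> rcases hdir2 with ⟨b1, b2⟩ | ⟨b1, b2⟩
      · -- Case A : both theta1
        rw [hθ₁ α β hα hβ a2, hθ₁ β ζ hβ hζ b2, mid]
        have e1 : F.S (G.s β) * F.S (ν₀ β ζ) = F.S (ν₀ β ζ) := by
          rw [← b1, F.S_rng]
        have hcc : G.s (ν₀ α β) = G.r (ν₀ β ζ) := by rw [a2, b1]
        rw [e1, F.ck2 _ _ hcc]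
        exact tdir1 α ζ _ hα hζ (red_comp h1red h2red hcc)
          (occ_comp h1red h2red hcc h1occ h2occ)
          (by rw [G.r_comp _ _ hcc, a1])
          (by rw [G.s_comp _ _ hcc, b2])
      · -- Case C : theta1 then theta2
        rw [hθ₁ α β hα hβ a2, hθ₂ β ζ hβ hζ b2, mid]
        rw [habs2 _ b2]
        rcases le_total (G.d (ν₀ β ζ)).2 (G.d (ν₀ α β)).2 with h | h
        · obtain ⟨σ, hσ1, hσ2, hσ3⟩ := C.nest_source hmζ hmα (dpair h2red)
            (dpair h1red) h (by rw [b1, ← hvζ]) (by rw [a1, ← hvα])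
            (by rw [a2, b2])
          have hσred : G.IsRed σ := by show (G.d σ).1 = 0; rw [hσ1]
          have hσocc : G.occCount σ estar = 0 := by
            apply occ_pre hσ2.symm.symm ?_
            · rw [hσ3]; exact h1occ
          have hrσ : G.r σ = G.s α := by rw [← G.r_comp σ _ hσ2.symm.symm, hσ3, a1]
          have key : F.S (ν₀ α β) * star (F.S (ν₀ β ζ)) = F.S σ := by
            calc F.S (ν₀ α β) * star (F.S (ν₀ β ζ))
                = F.S σ * F.S (ν₀ β ζ) * star (F.S (ν₀ β ζ)) := by
                  rw [F.ck2 σ _ hσ2, hσ3]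
              _ = F.S σ * (F.S (ν₀ β ζ) * star (F.S (ν₀ β ζ))) := by
                  rw [mul_assoc]
              _ = F.S σ * F.S (C.vv mζ) := by
                  rw [F.red_full C hfinP (G.d (ν₀ β ζ)).2 mζ hmζ _ (dpair h2red)
                    (by rw [b1, ← hvζ])]
              _ = F.S σ := by
                  rw [show C.vv mζ = G.s σ from by rw [hvζ, ← b1, hσ2], F.S_src]
          rw [key]
          exact tdir1 α ζ σ hα hζ hσred hσocc hrσ (by rw [hσ2, b1])
        · obtain ⟨σ, hσ1, hσ2, hσ3⟩ := C.nest_source hmα hmζ (dpair h1red)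
            (dpair h2red) h (by rw [a1, ← hvα]) (by rw [b1, ← hvζ])
            (by rw [a2, b2])
          have hσred : G.IsRed σ := by show (G.d σ).1 = 0; rw [hσ1]
          have hσocc : G.occCount σ estar = 0 := by
            apply occ_pre hσ2 ?_
            · rw [hσ3]; exact h2occ
          have hrσ : G.r σ = G.s ζ := by rw [← G.r_comp σ _ hσ2, hσ3, b1]
          have key : F.S (ν₀ α β) * star (F.S (ν₀ β ζ)) = star (F.S σ) := by
            calc F.S (ν₀ α β) * star (F.S (ν₀ β ζ))
                = F.S (ν₀ α β) * star (F.S σ * F.S (ν₀ α β)) := by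
                  rw [F.ck2 σ _ hσ2, hσ3]
              _ = (F.S (ν₀ α β) * star (F.S (ν₀ α β))) * star (F.S σ) := by
                  rw [star_mul, ← mul_assoc]
              _ = F.S (C.vv mα) * star (F.S σ) := by
                  rw [F.red_full C hfinP (G.d (ν₀ α β)).2 mα hmα _ (dpair h1red)
                    (by rw [a1, ← hvα])]
              _ = star (F.S σ) := by
                  rw [show C.vv mα = G.s σ from by rw [hvα, ← a1, hσ2],
                    ← F.ck1_sa _ (G.vertex_s' σ), ← star_mul, F.S_src]
          rw [key]
          exact tdir2 α ζ σ hα hζ hσred hσocc hrσ (by rw [hσ2, a1])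
      · -- Case B : theta2 then theta1
        rw [hθ₂ α β hα hβ a2, hθ₁ β ζ hβ hζ b2, mid]
        have e1 : F.S (G.s β) * F.S (ν₀ β ζ) = F.S (ν₀ β ζ) := by
          rw [← b1, F.S_rng]
        rw [e1]
        rcases le_total (G.d (ν₀ α β)).2 (G.d (ν₀ β ζ)).2 with h | h
        · obtain ⟨σ, hσ1, hσ2, hσ3, hσ4⟩ := C.nest_range hmβ (dpair h1red)
            (dpair h2red) h (by rw [a1, ← hvβ]) (by rw [b1, ← hvβ])
          have hσred : G.IsRed σ := by show (G.d σ).1 = 0; rw [hσ1]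
          have hσocc : G.occCount σ estar = 0 := by
            apply occ_suf h1red hσ2 ?_
            · rw [hσ3]; exact h2occ
          have key : star (F.S (ν₀ α β)) * F.S (ν₀ β ζ) = F.S σ := by
            calc star (F.S (ν₀ α β)) * F.S (ν₀ β ζ)
                = star (F.S (ν₀ α β)) * (F.S (ν₀ α β) * F.S σ) := by
                  rw [F.ck2 _ σ hσ2, hσ3]
              _ = (star (F.S (ν₀ α β)) * F.S (ν₀ α β)) * F.S σ := by
                  rw [mul_assoc]
              _ = F.S (G.s (ν₀ α β)) * F.S σ := by rw [F.ck3]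
              _ = F.S σ := by rw [hσ2]; exact F.S_rng σ
          rw [key]
          exact tdir1 α ζ σ hα hζ hσred hσocc (by rw [← hσ2, a2]) (by rw [hσ4, b2])
        · obtain ⟨σ, hσ1, hσ2, hσ3, hσ4⟩ := C.nest_range hmβ (dpair h2red)
            (dpair h1red) h (by rw [b1, ← hvβ]) (by rw [a1, ← hvβ])
          have hσred : G.IsRed σ := by show (G.d σ).1 = 0; rw [hσ1]
          have hσocc : G.occCount σ estar = 0 := by
            apply occ_suf h2red hσ2 ?_
            · rw [hσ3]; exact h1occ
          have key : star (F.S (ν₀ α β)) * F.S (ν₀ β ζ) = star (F.S σ) := by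
            calc star (F.S (ν₀ α β)) * F.S (ν₀ β ζ)
                = star (F.S (ν₀ β ζ) * F.S σ) * F.S (ν₀ β ζ) := by
                  rw [F.ck2 _ σ hσ2, hσ3]
              _ = star (F.S σ) * (star (F.S (ν₀ β ζ)) * F.S (ν₀ β ζ)) := by
                  rw [star_mul, mul_assoc]
              _ = star (F.S σ) * F.S (G.s (ν₀ β ζ)) := by rw [F.ck3]
              _ = star (F.S σ) := by
                  rw [hσ2, ← F.ck1_sa _ (G.vertex_r' σ), ← star_mul, F.S_rng]
          rw [key]
          exact tdir2 α ζ σ hα hζ hσred hσocc (by rw [← hσ2, b2]) (by rw [hσ4, a2])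
      · -- Case D : both theta2
        rw [hθ₂ α β hα hβ a2, hθ₂ β ζ hβ hζ b2, mid]
        rw [habs2 _ b2]
        have hcc : G.s (ν₀ β ζ) = G.r (ν₀ α β) := by rw [b2, a1]
        have key : star (F.S (ν₀ α β)) * star (F.S (ν₀ β ζ)) =
            star (F.S (G.comp (ν₀ β ζ) (ν₀ α β))) := by
          rw [← F.ck2 _ _ hcc, star_mul]
        rw [key]
        exact tdir2 α ζ _ hα hζ (red_comp h2red h1red hcc)
          (occ_comp h2red h1red hcc h2occ h1occ)
          (by rw [G.r_comp _ _ hcc, b1])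
          (by rw [G.s_comp _ _ hcc, a2])
    · intro hbne
      have hkill : ∀ X Y : A,
          (F.S α * X * star (F.S β)) * (F.S η * Y * star (F.S ζ)) = 0 := by
        intro X Y
        have h0 := F.S_orth hfinP hβ hη hbne
        calc (F.S α * X * star (F.S β)) * (F.S η * Y * star (F.S ζ))
            = F.S α * X * (star (F.S β) * F.S η) * Y * star (F.S ζ) := by
              noncomm_ring
          _ = 0 := by rw [h0]; simp
      obtain ⟨-, -, hdirab⟩ := hν₀ α β hα hβ
      obtain ⟨-, -, hdirhz⟩ := hν₀ η ζ hη hζ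
      rcases hdirab with ⟨a1, a2⟩ | ⟨a1, a2⟩ <;>
        rcases hdirhz with ⟨b1, b2⟩ | ⟨b1, b2⟩ <;>
        first
        | (rw [hθ₁ α β hα hβ a2, hθ₁ η ζ hη hζ b2]; exact hkill _ _)
        | (rw [hθ₁ α β hα hβ a2, hθ₂ η ζ hη hζ b2]; exact hkill _ _)
        | (rw [hθ₂ α β hα hβ a2, hθ₁ η ζ hη hζ b2]; exact hkill _ _)
        | (rw [hθ₂ α β hα hβ a2, hθ₂ η ζ hη hζ b2]; exact hkill _ _)
  refine ⟨hstar, hmul, ?_⟩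
  intro hv α β hα hβ hzero
  have hββ : θ β β = F.S β * star (F.S β) := by
    have h := tdir1 β β (G.s β) hβ hβ
      (by show (G.d (G.s β)).1 = 0; rw [G.d_s]; rfl)
      (TwoGraph.occCount_vertex (G.d_s β) (by rw [he1]; exact one_ne_zero))
      (TwoGraph.vertex_r (G.vertex_s' β))
      (TwoGraph.vertex_s (G.vertex_s' β))
    rw [F.S_src] at h
    exact h.symm
  have hprod := (hmul β α α β hβ hα hα hβ).1 rfl
  rw [hzero, mul_zero] at hprod
  have hb : F.S β * star (F.S β) = 0 := by rw [← hββ, ← hprod]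
  have hβ0 : F.S β = 0 := (CStarRing.mul_star_self_eq_zero_iff _).1 hb
  have hsb : F.S (G.s β) = 0 := by rw [← F.ck3 β, hβ0, mul_zero]
  exact hv (G.s β) (G.d_s β) hsb
end

section
/- Let (Λ,d) be a finite 2-graph satisfying condition (3.1). Write the set S of sources of the blue graph as a disjoint union S = S₁ ⊔ ⋯ ⊔ Sₙ where each S_j is the vertex set of one of the isolated cycles in the red graph. For 1 ≤ j ≤ n, let Λ_j := {λ ∈ Λ : s(λ)ΛS_j ≠ ∅}, with d_j the restriction of d to Λ_j. Then each (Λ_j, d_j) is a 2-graph satisfying condition (3.1) (in particular Λ_j is closed under composition and factorisations), and S_j = S ∩ Λ_j is precisely the set of sources of the blue graph of Λ_j. -/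
open scoped ENNReal

/-- If a red edge ends (has source) on an isolated red cycle, it also starts on it. -/
lemma TwoGraph.red_edge_on (G : TwoGraph) (lam f : G.Path)
    (hiso : G.IsIsolatedRedCycle lam) (hf : G.IsRedEdge f)
    (h : G.OnPath lam (G.s f)) : G.OnPath lam (G.r f) := by
  obtain ⟨hred, hcyc, hne, hnx⟩ := hiso
  obtain ⟨hv, σ, ⟨τ, hστ, hcompστ⟩, hσ⟩ := h
  have hdlam : G.d lam = G.d σ + G.d τ := by rw [← hcompστ, G.d_comp _ _ hστ]
  have hlam1 : (G.d lam).1 = 0 := hred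
  have hlam2 : 1 ≤ (G.d lam).2 := by
    rcases Nat.eq_zero_or_pos (G.d lam).2 with h0 | h0
    · exact absurd (Prod.ext hlam1 h0) hcyc.1
    · exact h0
  by_cases h0 : G.d σ = 0
  · have hσv : G.s σ = σ := G.s_vertex σ h0
    have hrτ : G.r τ = σ := by rw [← hστ, hσv]
    have hlamτ : lam = τ := by rw [← hcompστ, ← hrτ, G.id_comp]
    have hsf : G.s f = G.s lam := by
      rw [← hcyc.2.1, hlamτ, hrτ, ← hσv, hσ]
    obtain ⟨ν, hν1, hν2⟩ := hnx (0, 1) (Prod.mk_le_mk.mpr ⟨Nat.zero_le _, hlam2⟩) f hf hsf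
    exact ⟨G.d_r f, ν, ⟨f, hν1, hν2⟩, hν1⟩
  · have hrτ : G.r τ = G.s f := by rw [← hστ, hσ]
    have hσ1 : (G.d σ).1 = 0 := by
      have := congrArg Prod.fst hdlam
      simp only [Prod.fst_add] at this
      omega
    have hσ2 : 1 ≤ (G.d σ).2 := by
      rcases Nat.eq_zero_or_pos (G.d σ).2 with h2 | h2
      · exact absurd (Prod.ext hσ1 h2) h0
      · exact h2
    have hdχ : G.d (G.comp f τ) = (0, 1) + G.d τ := by
      rw [G.d_comp f τ hrτ.symm, hf]
    have hle : G.d (G.comp f τ) ≤ G.d lam := by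
      rw [hdχ, hdlam, Prod.le_def, Prod.fst_add, Prod.fst_add, Prod.snd_add, Prod.snd_add]
      constructor <;> simp <;> omega
    have hsχ : G.s (G.comp f τ) = G.s lam := by
      rw [G.s_comp f τ hrτ.symm, ← hcompστ, G.s_comp σ τ hστ]
    obtain ⟨ν, hν1, hν2⟩ := hnx (G.d (G.comp f τ)) hle (G.comp f τ) rfl hsχ
    have hν1' : G.s ν = G.r f := by rw [hν1, G.r_comp f τ hrτ.symm]
    exact ⟨G.d_r f, ν, ⟨G.comp f τ, hν1, hν2⟩, hν1'⟩

/-- If a red path ends on an isolated red cycle, it also starts on it. -/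
lemma TwoGraph.red_path_on (G : TwoGraph) (lam : G.Path)
    (hiso : G.IsIsolatedRedCycle lam) (b : ℕ) :
    ∀ μ : G.Path, G.d μ = (0, b) → G.OnPath lam (G.s μ) → G.OnPath lam (G.r μ) := by
  induction b with
  | zero =>
    intro μ hd h
    have h0 : G.d μ = 0 := hd
    rw [G.r_vertex μ h0]
    rw [G.s_vertex μ h0] at h
    exact h
  | succ b ih =>
    intro μ hd h
    obtain ⟨⟨x, y⟩, ⟨hdx, hdy, hxy, hcomp⟩, -⟩ :=
      G.factor μ (0, b) (0, 1) (by rw [hd, Prod.mk_add_mk])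
    have hsy : G.s y = G.s μ := by rw [← hcomp, G.s_comp x y hxy]
    have h1 : G.OnPath lam (G.r y) := G.red_edge_on lam y hiso hdy (by rw [hsy]; exact h)
    have h2 : G.OnPath lam (G.s x) := by rw [hxy]; exact h1
    have h3 := ih x hdx h2
    rw [← hcomp, G.r_comp x y hxy]
    exact h3

/-- Decomposing a finite 2-graph satisfying (3.1) along the isolated
red cycles through the sources of the blue graph: each `Λ_j` is a sub-2-graph satisfying
condition (3.1), and `S_j = S ∩ Λ_j` is the set of sources of its blue graph. -/
theorem stmt8 (G : TwoGraph) (hfin : G.FinitePaths) (h31 : G.Cond31)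
    (n : ℕ) (SS : Fin n → Set G.Path)
    (hcyc : ∀ j, ∃ lam, G.IsIsolatedRedCycle lam ∧ SS j = {v | G.OnPath lam v})
    (hdisj : ∀ i j, i ≠ j → Disjoint (SS i) (SS j))
    (hsrc : {v | G.IsBlueSource v} = ⋃ j, SS j) :
    ∀ j : Fin n,
      (∀ p ∈ G.subGraphTo (SS j),
        G.r p ∈ G.subGraphTo (SS j) ∧ G.s p ∈ G.subGraphTo (SS j)) ∧
      (∀ p q, G.s p = G.r q → q ∈ G.subGraphTo (SS j) →
        p ∈ G.subGraphTo (SS j) ∧ G.comp p q ∈ G.subGraphTo (SS j)) ∧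
      (∀ p q, G.s p = G.r q → G.comp p q ∈ G.subGraphTo (SS j) →
        p ∈ G.subGraphTo (SS j) ∧ q ∈ G.subGraphTo (SS j)) ∧
      G.Cond31In (G.subGraphTo (SS j)) ∧
      ({v | G.IsBlueSourceIn (G.subGraphTo (SS j)) v} = SS j) ∧
      (SS j = {v | G.IsBlueSource v} ∩ G.subGraphTo (SS j)) := by
  intro j
  set P := G.subGraphTo (SS j) with hPdef
  have hSSsrc : ∀ v ∈ SS j, G.IsBlueSource v := by
    intro v hv
    have hmem : v ∈ ⋃ i, SS i := Set.mem_iUnion.mpr ⟨j, hv⟩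
    rw [← hsrc] at hmem
    exact hmem
  have hSSP : ∀ v ∈ SS j, v ∈ P := by
    intro v hv
    have hvv : G.IsVertex v := (hSSsrc v hv).1
    exact ⟨v, by rw [G.s_vertex v hvv, G.r_vertex v hvv], by rw [G.s_vertex v hvv]; exact hv⟩
  have c1 : ∀ p ∈ P, G.r p ∈ P ∧ G.s p ∈ P := by
    rintro p ⟨μ, hμ1, hμ2⟩
    constructor
    · refine ⟨G.comp p μ, ?_, ?_⟩
      · rw [G.r_comp p μ hμ1.symm, G.s_vertex _ (G.d_r p)]
      · rw [G.s_comp p μ hμ1.symm]; exact hμ2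
    · exact ⟨μ, by rw [G.s_vertex _ (G.d_s p)]; exact hμ1, hμ2⟩
  have c2 : ∀ p q, G.s p = G.r q → q ∈ P → p ∈ P ∧ G.comp p q ∈ P := by
    rintro p q hpq ⟨μ, hμ1, hμ2⟩
    constructor
    · refine ⟨G.comp q μ, ?_, ?_⟩
      · rw [G.r_comp q μ hμ1.symm]; exact hpq.symm
      · rw [G.s_comp q μ hμ1.symm]; exact hμ2
    · exact ⟨μ, by rw [G.s_comp p q hpq]; exact hμ1, hμ2⟩
  have c3 : ∀ p q, G.s p = G.r q → G.comp p q ∈ P → p ∈ P ∧ q ∈ P := by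
    rintro p q hpq ⟨μ, hμ1, hμ2⟩
    have hq : q ∈ P := ⟨μ, by rw [← G.s_comp p q hpq]; exact hμ1, hμ2⟩
    exact ⟨(c2 p q hpq hq).1, hq⟩
  have rf : G.RowFiniteIn P := fun v m _ => (hfin m).subset (fun p hp => hp.2.2)
  have nb : ∀ p ∈ P, G.IsBlue p → ¬ G.IsCycleIn P p := by
    intro p hp hblue hcycle
    refine h31.2.1 p hblue ?_
    obtain ⟨hpP, hd, hrs, hinit⟩ := hcycle
    refine ⟨hd, hrs, ?_⟩
    rintro μ ⟨ν, hν1, hν2⟩ hdμ hdne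
    have hμν := c3 μ ν hν1 (hν2.symm ▸ hpP)
    exact hinit μ hμν.1 ⟨ν, hμν.2, hν1, hν2⟩ hdμ hdne
  have rc : ∀ v ∈ P, G.IsVertex v → ∃ lam, G.IsIsolatedRedCycleIn P lam ∧ G.r lam = v := by
    intro v hvP hv
    obtain ⟨lam, ⟨hred, hcyc', hiso'⟩, hrlam⟩ := h31.2.2 v hv
    have hslam : G.s lam = v := by rw [← hcyc'.2.1, hrlam]
    obtain ⟨μ, hμ1, hμ2⟩ := hvP
    have hμ1' : G.r μ = v := by rw [hμ1, G.s_vertex v hv]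
    have hlamP : lam ∈ P := ⟨μ, by rw [hslam]; exact hμ1', hμ2⟩
    refine ⟨lam, ⟨hlamP, hred, ?_, ?_, ?_⟩, hrlam⟩
    · refine ⟨hlamP, hcyc'.1, hcyc'.2.1, ?_⟩
      rintro μ' _ ⟨ν, _, hν1, hν2⟩ hdμ' hdne
      exact hcyc'.2.2 μ' ⟨ν, hν1, hν2⟩ hdμ' hdne
    · intro m hm μ' _ hdμ' hrμ'
      obtain ⟨ν, hν1, hν2⟩ := hiso'.1 m hm μ' hdμ' hrμ'
      exact ⟨ν, (c3 μ' ν hν1 (hν2.symm ▸ hlamP)).2, hν1, hν2⟩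
    · intro m hm μ' _ hdμ' hsμ'
      obtain ⟨ν, hν1, hν2⟩ := hiso'.2 m hm μ' hdμ' hsμ'
      exact ⟨ν, (c3 ν μ' hν1 (hν2.symm ▸ hlamP)).1, hν1, hν2⟩
  have s5 : {v | G.IsBlueSourceIn P v} = SS j := by
    ext v
    constructor
    · rintro ⟨hvP, hv, hnoblue⟩
      obtain ⟨μ, hμ1, hμ2⟩ := hvP
      have hμ1' : G.r μ = v := by rw [hμ1, G.s_vertex v hv]
      have hμP : μ ∈ P :=
        ⟨G.s μ, G.r_vertex _ (G.d_s μ), by rw [G.s_vertex _ (G.d_s μ)]; exact hμ2⟩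
      rcases Nat.eq_zero_or_pos (G.d μ).1 with h0 | hpos
      · obtain ⟨lam, hlam, hSSeq⟩ := hcyc j
        have hon : G.OnPath lam (G.s μ) := by rw [hSSeq] at hμ2; exact hμ2
        have hres := G.red_path_on lam hlam (G.d μ).2 μ (Prod.ext h0 rfl) hon
        rw [hμ1'] at hres
        show v ∈ SS j
        rw [hSSeq]
        exact hres
      · obtain ⟨⟨e, μ'⟩, ⟨hde, hdμ', heμ, hcompe⟩, -⟩ :=
          G.factor μ (1, 0) ((G.d μ).1 - 1, (G.d μ).2)
            (by rw [Prod.mk_add_mk]; exact Prod.ext (by omega) (by simp))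
        have heP : e ∈ P := (c3 e μ' heμ (hcompe.symm ▸ hμP)).1
        have hre : G.r e = v := by rw [← hμ1', ← hcompe, G.r_comp e μ' heμ]
        exact absurd hre (hnoblue e heP hde)
    · intro hv
      have hbs := hSSsrc v hv
      exact ⟨hSSP v hv, hbs.1, fun e _ he => hbs.2 e he⟩
  refine ⟨c1, c2, c3, ⟨rf, nb, rc⟩, s5, ?_⟩
  ext v
  constructor
  · intro hv
    exact ⟨hSSsrc v hv, hSSP v hv⟩
  · rintro ⟨hbs, hvP⟩
    have : G.IsBlueSourceIn P v := ⟨hvP, hbs.1, fun e _ he => hbs.2 e he⟩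
    rw [← s5]
    exact this
end

section
/- Let (Λ,d) be a generalised Bratteli diagram of finite depth N ∈ ℕ, and let X := V₀(blue Λ)V_N be the set of blue paths with range in V₀ and source in V_N. Then X = Λ^{Ne₁} = V₀Λ^{≤Ne₁}. Moreover, for any Cuntz–Krieger Λ-family {s_λ} in a C*-algebra A, the projection P := ∑_{v ∈ V₀} s_v satisfies P = ∑_{α ∈ X} s_α s_α*, and P is full in the C*-subalgebra B generated by {s_λ}: the closed two-sided ideal of B generated by P is all of B. -/
open scoped ENNReal

section AuxProofs

variable {A : Type*} [CStarAlgebra A]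
variable {G : TwoGraph} {Nd : ℕ} {V : ℕ → Set G.Path}

lemma IsGBD.level_eq (hGBD : IsGBD G (Nd : ℕ∞) V) {m n : ℕ} {v : G.Path}
    (hm : v ∈ V m) (hn : v ∈ V n) : m = n := by
  by_contra h
  exact Set.disjoint_left.mp (hGBD.level_disjoint m n h) hm hn

lemma IsGBD.mem_level_le (hGBD : IsGBD G (Nd : ℕ∞) V) {n : ℕ} {v : G.Path}
    (hv : v ∈ V n) : n ≤ Nd := by
  by_contra h
  have he := hGBD.level_empty n (by exact_mod_cast h)
  simp [he] at hv

lemma IsGBD.source_level (hGBD : IsGBD G (Nd : ℕ∞) V) :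
    ∀ (k : ℕ) (p : G.Path) (m : ℕ), G.d p = (k, 0) → G.r p ∈ V m →
      G.s p ∈ V (m + k) := by
  intro k
  induction k with
  | zero =>
    intro p m hd hr
    have h0 : G.d p = 0 := hd
    rw [G.s_vertex p h0, ← G.r_vertex p h0]
    simpa using hr
  | succ k ih =>
    intro p m hd hr
    obtain ⟨⟨e, q⟩, ⟨hde, hdq, hsr, hcomp⟩, -⟩ :=
      G.factor p (1, 0) (k, 0) (by simp [hd, Prod.ext_iff, Nat.add_comm])
    have hre : G.r e = G.r p := by rw [← hcomp, G.r_comp e q hsr]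
    obtain ⟨n, hn1, hn2⟩ := hGBD.blue_level e hde
    have hnm : n = m := hGBD.level_eq hn1 (hre ▸ hr)
    have hrq : G.r q ∈ V (m + 1) := by
      rw [← hsr]; rw [hnm] at hn2; exact hn2
    have hsq := ih q (m + 1) hdq hrq
    have hsp : G.s p = G.s q := by rw [← hcomp, G.s_comp e q hsr]
    rw [hsp]
    have : m + 1 + k = m + (k + 1) := by omega
    rwa [this] at hsq

lemma IsGBD.eqX (hGBD : IsGBD G (Nd : ℕ∞) V) :
    {α : G.Path | G.IsBlue α ∧ G.r α ∈ V 0 ∧ G.s α ∈ V Nd}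
      = {p : G.Path | G.d p = (Nd, 0)} := by
  ext p
  constructor
  · rintro ⟨hb, hr, hs⟩
    have hd : G.d p = ((G.d p).1, 0) := by
      rw [← hb]
    have hsl := hGBD.source_level (G.d p).1 p 0 hd hr
    rw [zero_add] at hsl
    have hNd := hGBD.level_eq hsl hs
    show G.d p = (Nd, 0)
    rw [← hNd]
    exact hd
  · intro hd
    have hd' : G.d p = (Nd, 0) := hd
    have hb : G.IsBlue p := by simp [TwoGraph.IsBlue, hd']
    obtain ⟨m, hm⟩ := hGBD.cover (G.r p) (G.d_r p)
    have hsl := hGBD.source_level Nd p m hd' hm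
    have hle := hGBD.mem_level_le hsl
    have hm0 : m = 0 := by omega
    subst hm0
    rw [zero_add] at hsl
    exact ⟨hb, hm, hsl⟩

lemma IsGBD.eqLe (hGBD : IsGBD G (Nd : ℕ∞) V) :
    {p : G.Path | G.d p = (Nd, 0)}
      = {p : G.Path | p ∈ G.LeSet (Nd, 0) ∧ G.r p ∈ V 0} := by
  ext p
  constructor
  · intro hd
    have hd' : G.d p = (Nd, 0) := hd
    have hrV0 : G.r p ∈ V 0 := by
      have : p ∈ {α : G.Path | G.IsBlue α ∧ G.r α ∈ V 0 ∧ G.s α ∈ V Nd} := by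
        rw [hGBD.eqX]; exact hd
      exact this.2.1
    refine ⟨⟨le_of_eq hd', ?_⟩, hrV0⟩
    intro μ hsμ hne hle
    rw [G.d_comp p μ hsμ, hd'] at hle
    obtain ⟨ha, hb⟩ := Prod.le_def.mp hle
    simp only [Prod.fst_add, Prod.snd_add] at ha hb
    have h1 : (G.d μ).1 = 0 ∧ (G.d μ).2 = 0 := by
      constructor <;> omega
    have hdμ : G.d μ = 0 := Prod.ext h1.1 h1.2
    have : μ = G.s p := by rw [← G.r_vertex μ hdμ, ← hsμ]
    exact hne (by rw [this, G.comp_id])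
  · rintro ⟨⟨hle, hmax⟩, hr⟩
    have h2 : (G.d p).2 = 0 := Nat.le_zero.mp hle.2
    set k := (G.d p).1 with hk
    have hdp : G.d p = (k, 0) := by rw [← h2]
    have hkle : k ≤ Nd := hle.1
    have hsl := hGBD.source_level k p 0 hdp hr
    rw [zero_add] at hsl
    have hkNd : k = Nd := by
      by_contra hne
      have hnots : ¬ G.IsBlueSource (G.s p) := by
        rintro hsrc
        obtain ⟨n, hnN, hvn⟩ := hGBD.sources_top (G.s p) hsrc
        have hnNd : n = Nd := by exact_mod_cast hnN
        exact hne (hGBD.level_eq hsl (hnNd ▸ hvn))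
      have hex : ∃ e, G.IsBlueEdge e ∧ G.r e = G.s p := by
        by_contra h
        push_neg at h
        exact hnots ⟨G.d_s p, fun e he => h e he⟩
      obtain ⟨e, hbe, hre⟩ := hex
      have hsre : G.s p = G.r e := hre.symm
      have hdc : G.d (G.comp p e) = (k + 1, 0) := by
        rw [G.d_comp p e hsre, hdp, hbe]
        simp [Prod.ext_iff]
      have hnec : G.comp p e ≠ p := by
        intro h
        rw [h, hdp] at hdc
        simp [Prod.ext_iff] at hdc
      exact hmax e hsre hnec (by rw [hdc]; exact Prod.le_def.mpr ⟨by omega, le_rfl⟩)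
    show G.d p = (Nd, 0)
    rw [hdp, hkNd]

lemma CKFamily.range_mul (F : CKFamily G A) (p : G.Path) :
    F.S (G.r p) * F.S p = F.S p := by
  rw [F.ck2 (G.r p) p (G.s_vertex (G.r p) (G.d_r p)), G.id_comp]

lemma CKFamily.mul_source (F : CKFamily G A) (p : G.Path) :
    F.S p * F.S (G.s p) = F.S p := by
  rw [F.ck2 p (G.s p) (G.r_vertex (G.s p) (G.d_s p)).symm, G.comp_id]

lemma CKFamily.source_mul_star (F : CKFamily G A) (p : G.Path) :
    F.S (G.s p) * star (F.S p) = star (F.S p) := by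
  conv_rhs => rw [← F.mul_source p]
  rw [star_mul, F.ck1_sa (G.s p) (G.d_s p)]

end AuxProofs

/-- For a GBD of finite depth `N`:
`X = V₀(blue Λ)V_N = Λ^{Ne₁} = V₀Λ^{≤Ne₁}`, `P = ∑_{v ∈ V₀} s_v = ∑_{α ∈ X} s_α s_α*`,
and `P` is full in the generated C*-algebra. -/
theorem stmt10 {A : Type*} [CStarAlgebra A]
    (G : TwoGraph) (Nd : ℕ) (V : ℕ → Set G.Path)
    (hGBD : IsGBD G (Nd : ℕ∞) V) (F : CKFamily G A) :
    ({α : G.Path | G.IsBlue α ∧ G.r α ∈ V 0 ∧ G.s α ∈ V Nd}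
        = {p : G.Path | G.d p = (Nd, 0)}) ∧
    ({α : G.Path | G.IsBlue α ∧ G.r α ∈ V 0 ∧ G.s α ∈ V Nd}
        = {p : G.Path | p ∈ G.LeSet (Nd, 0) ∧ G.r p ∈ V 0}) ∧
    ((∑ᶠ v ∈ V 0, F.S v) =
      ∑ᶠ α ∈ {α : G.Path | G.IsBlue α ∧ G.r α ∈ V 0 ∧ G.s α ∈ V Nd},
        F.S α * star (F.S α)) ∧
    FullIn (generatedCStar (Set.range F.S)) (∑ᶠ v ∈ V 0, F.S v) := by
  have eq1 := hGBD.eqX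
  have eqLe := hGBD.eqLe
  have eq2 := eq1.trans eqLe
  have hV0fin := hGBD.level_finite 0
  -- the sets vΛ^{≤ (Nd,0)}
  have hsv : ∀ v ∈ V 0,
      {lam : G.Path | lam ∈ G.LeSet (Nd, 0) ∧ G.r lam = v}
        = {p : G.Path | G.r p = v ∧ G.d p = (Nd, 0)} := by
    intro v hv
    ext p
    constructor
    · rintro ⟨hle, hrv⟩
      have hp : p ∈ {p : G.Path | p ∈ G.LeSet (Nd, 0) ∧ G.r p ∈ V 0} :=
        ⟨hle, hrv ▸ hv⟩
      rw [← eqLe] at hp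
      exact ⟨hrv, hp⟩
    · rintro ⟨hrv, hd⟩
      have hp : p ∈ {p : G.Path | G.d p = (Nd, 0)} := hd
      rw [eqLe] at hp
      exact ⟨hp.1, hrv⟩
  have hsvfin : ∀ v ∈ V 0,
      {lam : G.Path | lam ∈ G.LeSet (Nd, 0) ∧ G.r lam = v}.Finite := by
    intro v hv
    rw [hsv v hv]
    exact hGBD.rowFinite v (Nd, 0) (hGBD.level_vertex 0 hv)
  -- part 3
  have part3 : (∑ᶠ v ∈ V 0, F.S v) =
      ∑ᶠ α ∈ {α : G.Path | G.IsBlue α ∧ G.r α ∈ V 0 ∧ G.s α ∈ V Nd},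
        F.S α * star (F.S α) := by
    have hdisj : (V 0).PairwiseDisjoint
        (fun v => {lam : G.Path | lam ∈ G.LeSet (Nd, 0) ∧ G.r lam = v}) := by
      intro a ha b hb hab
      simp only [Function.onFun]
      rw [Set.disjoint_left]
      rintro x ⟨-, hxa⟩ ⟨-, hxb⟩
      exact hab (hxa ▸ hxb ▸ rfl)
    have hbi := finsum_mem_biUnion (f := fun lam => F.S lam * star (F.S lam))
      hdisj hV0fin hsvfin
    have hunion : (⋃ v ∈ V 0,
        {lam : G.Path | lam ∈ G.LeSet (Nd, 0) ∧ G.r lam = v})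
          = {α : G.Path | G.IsBlue α ∧ G.r α ∈ V 0 ∧ G.s α ∈ V Nd} := by
      rw [eq2]
      ext lam
      simp only [Set.mem_iUnion, Set.mem_setOf_eq, exists_prop]
      constructor
      · rintro ⟨v, hv, h1, rfl⟩
        exact ⟨h1, hv⟩
      · rintro ⟨h1, h2⟩
        exact ⟨G.r lam, h2, h1, rfl⟩
    rw [← hunion, hbi]
    exact finsum_mem_congr rfl (fun v hv => F.ck4 v (Nd, 0) (hGBD.level_vertex 0 hv))
  refine ⟨eq1, eq2, part3, ?_⟩
  -- part 4: fullness
  intro I hIB hIcl hIadd hIsmul hImul hPI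
  have hSadj : ∀ p, F.S p ∈ (NonUnitalStarAlgebra.adjoin ℂ (Set.range F.S) : Set A) :=
    fun p => NonUnitalStarAlgebra.subset_adjoin ℂ _ ⟨p, rfl⟩
  have hSB : ∀ p, F.S p ∈ generatedCStar (Set.range F.S) :=
    fun p => subset_closure (hSadj p)
  have hstarB : ∀ x ∈ generatedCStar (Set.range F.S),
      star x ∈ generatedCStar (Set.range F.S) := by
    intro x hx
    exact map_mem_closure continuous_star hx (fun y hy => star_mem hy)
  -- all vertex projections lie in I
  have hvI : ∀ n, ∀ v ∈ V n, F.S v ∈ I := by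
    intro n
    induction n with
    | zero =>
      intro v hv
      have hvert : ∀ w ∈ V 0, G.IsVertex w := fun w hw => hGBD.level_vertex 0 hw
      have hmul : F.S v * (∑ᶠ w ∈ V 0, F.S w) = F.S v := by
        rw [← Set.Finite.coe_toFinset hV0fin, finsum_mem_coe_finset, Finset.mul_sum,
          Finset.sum_eq_single_of_mem v (hV0fin.mem_toFinset.2 hv)]
        · exact F.ck1_idem v (hvert v hv)
        · intro w hw hne
          exact F.ck1_orth v w (hvert v hv) (hvert w (hV0fin.mem_toFinset.1 hw)) hne.symm
      exact hmul ▸ (hImul (F.S v) (hSB v) _ hPI).1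
    | succ n ih =>
      intro v hv
      have hvvert : G.IsVertex v := hGBD.level_vertex _ hv
      have hex : ∃ e, G.IsBlueEdge e ∧ G.s e = v := by
        by_contra h
        push_neg at h
        have hsink : G.IsBlueSink v := ⟨hvvert, fun e he => h e he⟩
        have hv0 := hGBD.sinks_bottom v hsink
        exact Nat.succ_ne_zero n (hGBD.level_eq hv hv0)
      obtain ⟨e, hbe, hse⟩ := hex
      obtain ⟨m, hrm, hsm⟩ := hGBD.blue_level e hbe
      have hmn : m + 1 = n + 1 := hGBD.level_eq hsm (hse ▸ hv)
      have hrn : G.r e ∈ V n := by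
        have : m = n := by omega
        rwa [this] at hrm
      have hre : F.S (G.r e) ∈ I := ih _ hrn
      have heI : F.S e ∈ I :=
        F.range_mul e ▸ (hImul (F.S e) (hSB e) _ hre).2
      have h2 : star (F.S e) * F.S e = F.S v := by rw [F.ck3 e, hse]
      exact h2 ▸ (hImul (star (F.S e)) (hstarB _ (hSB e)) _ heI).1
  -- all generators and their adjoints lie in I
  have hgenI : ∀ p, F.S p ∈ I ∧ star (F.S p) ∈ I := by
    intro p
    obtain ⟨n, hn⟩ := hGBD.cover (G.r p) (G.d_r p)
    obtain ⟨n', hn'⟩ := hGBD.cover (G.s p) (G.d_s p)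
    exact ⟨F.range_mul p ▸ (hImul (F.S p) (hSB p) _ (hvI n _ hn)).2,
      F.source_mul_star p ▸
        (hImul (star (F.S p)) (hstarB _ (hSB p)) _ (hvI n' _ hn')).2⟩
  have hzero : (0 : A) ∈ I := by
    have := hIsmul 0 _ hPI
    simpa using this
  have hadj : ∀ x ∈ (NonUnitalStarAlgebra.adjoin ℂ (Set.range F.S) : Set A),
      x ∈ I ∧ star x ∈ I := by
    intro x hx
    induction hx using NonUnitalStarAlgebra.adjoin_induction with
    | mem x hx =>
      obtain ⟨p, rfl⟩ := hx
      exact hgenI p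
    | add x y hx hy ihx ihy =>
      exact ⟨hIadd _ ihx.1 _ ihy.1, by rw [star_add]; exact hIadd _ ihx.2 _ ihy.2⟩
    | zero => exact ⟨hzero, by rw [star_zero]; exact hzero⟩
    | mul x y hx hy ihx ihy =>
      refine ⟨(hImul x (hIB ihx.1) y ihy.1).1, ?_⟩
      rw [star_mul]
      exact (hImul (star x) (hstarB x (hIB ihx.1)) (star y) ihy.2).2
    | smul c x hx ihx =>
      exact ⟨hIsmul c x ihx.1, by rw [star_smul]; exact hIsmul _ _ ihx.2⟩
    | star x hx ihx =>
      exact ⟨ihx.2, by rw [star_star]; exact ihx.1⟩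
  exact closure_minimal (fun x hx => (hadj x hx).1) hIcl
end
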